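/- arXiv:math/0502552 — 3 statements merged into one kernel-verified Lean document; each statement's English description precedes it below -/
import Mathlib

section
/- Let f(x,y) = x² − a²y² + b₀x³+b₁x²y+b₂xy²+b₃y³ + c₀x⁴+c₁x³y+c₂x²y²+c₃xy³+c₄y⁴ + h.o.t., with a > 0. Write f⁽³⁾(a) = b₀a³+b₁a²+b₂a+b₃ and f⁽⁴⁾(a) = c₀a⁴+c₁a³+c₂a²+c₃a+c₄. The branch of f = 0 tangent to x = a y has Taylor expansion x = a y − (1/(2a)) f⁽³⁾(a) y² + (1/(8a³))( f⁽³⁾(a)(5b₀a³ + 3b₁a² + b₂a − b₃) − 4a² f⁽⁴⁾(a) ) y³ + O(y⁴). -/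
open Topology Asymptotics Filter

/-- Partial derivative with respect to the first variable. -/
noncomputable def px (f : ℝ → ℝ → ℝ) : ℝ → ℝ → ℝ := fun x y => deriv (fun x' => f x' y) x

/-- Partial derivative with respect to the second variable. -/
noncomputable def py (f : ℝ → ℝ → ℝ) : ℝ → ℝ → ℝ := fun x y => deriv (fun y' => f x y') y

/-- The vertex function `V_f`. -/
noncomputable def Vf (f : ℝ → ℝ → ℝ) (x y : ℝ) : ℝ :=
  (px f x y ^ 2 + py f x y ^ 2) *
      (-(py f x y ^ 3) * px (px (px f)) x y + 3 * px f x y * py f x y ^ 2 * py (px (px f)) x y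
        - 3 * px f x y ^ 2 * py f x y * py (py (px f)) x y + px f x y ^ 3 * py (py (py f)) x y)
  + 3 * px f x y * py f x y *
      (py f x y ^ 2 * px (px f) x y ^ 2
        + (px f x y ^ 2 + py f x y ^ 2) * px (px f) x y * py (py f) x y
        - px f x y ^ 2 * py (py f) x y ^ 2)
  + 6 * px f x y * py f x y * py (px f) x y ^ 2 * (px f x y ^ 2 - py f x y ^ 2)
  + 3 * py (px f) x y *
      (px (px f) x y * py f x y ^ 4
        - 3 * px f x y ^ 2 * py f x y ^ 2 * (px (px f) x y - py (py f) x y)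
        - py (py f) x y * px f x y ^ 4)

/-- The inflexion (Hessian-type) function `I_f`. -/
noncomputable def Infl (f : ℝ → ℝ → ℝ) (x y : ℝ) : ℝ :=
  px (px f) x y * py f x y ^ 2 - 2 * py (px f) x y * px f x y * py f x y
    + py (py f) x y * px f x y ^ 2

/-- Curvature of the graph `y = h x`. -/
noncomputable def curvGraph (h : ℝ → ℝ) (x : ℝ) : ℝ :=
  deriv (deriv h) x / (1 + (deriv h x) ^ 2) ^ ((3 : ℝ) / 2)

open ContDiff

lemma littleo_of_derivs : ∀ (n : ℕ) (h : ℝ → ℝ), ContDiff ℝ ∞ h →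
    (∀ k ≤ n, iteratedDeriv k h 0 = 0) → h =o[𝓝 (0:ℝ)] fun y => y ^ n := by
  intro n
  induction n with
  | zero =>
    intro h hh hz
    simp only [pow_zero]
    rw [isLittleO_one_iff]
    have := hh.continuous.tendsto 0
    rwa [show h 0 = 0 from hz 0 le_rfl] at this
  | succ n ih =>
    intro h hh hz
    have hd : ContDiff ℝ ∞ (deriv h) := by
      have : ContDiff ℝ ∞ (deriv^[1] h) := ContDiff.iterate_deriv 1 hh
      simpa using this
    have hdz : ∀ k ≤ n, iteratedDeriv k (deriv h) 0 = 0 := by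
      intro k hk
      have := hz (k + 1) (by omega)
      rwa [iteratedDeriv_succ', ] at this
    have hio := ih (deriv h) hd hdz
    rw [isLittleO_iff] at hio ⊢
    intro ε hε
    have hb := hio hε
    rw [Metric.eventually_nhds_iff] at hb ⊢
    obtain ⟨δ, hδ, hball⟩ := hb
    refine ⟨δ, hδ, fun y hy => ?_⟩
    have hdiff : ∀ t ∈ Set.uIcc (0:ℝ) y, DifferentiableAt ℝ h t :=
      fun t _ => hh.differentiable (by simp) t
    have hbound : ∀ t ∈ Set.uIcc (0:ℝ) y, ‖deriv h t‖ ≤ ε * ‖y‖ ^ n := by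
      intro t ht
      have htle : |t| ≤ |y| := by
        rcases Set.mem_uIcc.1 ht with ⟨h1, h2⟩ | ⟨h1, h2⟩ <;> rw [abs_le] <;>
          constructor <;>
          cases' abs_le.1 (le_refl |y|) with hl hr <;> nlinarith [abs_nonneg y, le_abs_self y, neg_abs_le y]
      have htδ : dist t 0 < δ := by
        simp only [Real.dist_eq, sub_zero] at hy ⊢
        exact lt_of_le_of_lt htle hy
      have := hball htδ
      calc ‖deriv h t‖ ≤ ε * ‖t ^ n‖ := this
        _ ≤ ε * ‖y‖ ^ n := by
            rw [norm_pow]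
            exact mul_le_mul_of_nonneg_left (pow_le_pow_left₀ (norm_nonneg t) htle n) hε.le
    have key : ‖h y - h 0‖ ≤ (ε * ‖y‖ ^ n) * ‖y - 0‖ :=
      Convex.norm_image_sub_le_of_norm_deriv_le hdiff hbound (convex_uIcc 0 y)
        Set.left_mem_uIcc Set.right_mem_uIcc
    rw [show h 0 = 0 from hz 0 (Nat.zero_le _), sub_zero, sub_zero] at key
    calc ‖h y‖ ≤ ε * ‖y‖ ^ n * ‖y‖ := key
      _ = ε * ‖y ^ (n+1)‖ := by rw [norm_pow]; ring

lemma coeff_eq_zero (c : ℝ) (n : ℕ)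
    (h : (fun y : ℝ => c * y ^ n) =o[𝓝 (0:ℝ)] fun y => y ^ n) : c = 0 := by
  by_contra hc
  rw [isLittleO_iff] at h
  have h2 := h (show (0:ℝ) < |c|/2 by positivity)
  have h3 : ∀ᶠ y in 𝓝[≠] (0:ℝ), ‖c * y ^ n‖ ≤ |c|/2 * ‖y ^ n‖ :=
    h2.filter_mono nhdsWithin_le_nhds
  obtain ⟨y, hy, hyne⟩ := (h3.and self_mem_nhdsWithin).exists
  have hyn : (0:ℝ) < ‖y ^ n‖ := by
    have hy0 : y ≠ 0 := hyne
    rw [norm_pow]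
    exact pow_pos (norm_pos_iff.mpr hy0) n
  rw [norm_mul] at hy
  have : ‖c‖ ≤ |c|/2 := le_of_mul_le_mul_right (by nlinarith [hy]) hyn
  rw [Real.norm_eq_abs] at this
  have : |c| > 0 := abs_pos.mpr hc
  linarith

set_option maxHeartbeats 1600000 in
theorem branch_third_coefficient (f R : ℝ → ℝ → ℝ)
    (a b0 b1 b2 b3 c0 c1 c2 c3 c4 : ℝ) (ha : 0 < a)
    (hfR : ∀ x y, f x y = x ^ 2 - a ^ 2 * y ^ 2 + b0 * x ^ 3 + b1 * x ^ 2 * y + b2 * x * y ^ 2 + b3 * y ^ 3 + c0 * x ^ 4 + c1 * x ^ 3 * y + c2 * x ^ 2 * y ^ 2 + c3 * x * y ^ 3 + c4 * y ^ 4 + R x y)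
    (hR : ContDiff ℝ (⊤ : ℕ∞) (fun p : ℝ × ℝ => R p.1 p.2))
    (hRo : (fun p : ℝ × ℝ => R p.1 p.2) =o[𝓝 (0 : ℝ × ℝ)] fun p => ‖p‖ ^ 4)
    (φ : ℝ → ℝ) (hφ : ContDiff ℝ (⊤ : ℕ∞) φ) (hφ0 : φ 0 = 0) (hφ1 : deriv φ 0 = a)
    (hbranch : ∀ᶠ y in 𝓝 (0 : ℝ), f (φ y) y = 0) :
    deriv (deriv φ) 0 / 2 = -(b0 * a ^ 3 + b1 * a ^ 2 + b2 * a + b3) / (2 * a)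
    ∧ iteratedDeriv 3 φ 0 / 6 =
      (1 / (8 * a ^ 3)) *
        ((b0 * a ^ 3 + b1 * a ^ 2 + b2 * a + b3) * (5 * b0 * a ^ 3 + 3 * b1 * a ^ 2 + b2 * a - b3)
          - 4 * a ^ 2 * (c0 * a ^ 4 + c1 * a ^ 3 + c2 * a ^ 2 + c3 * a + c4)) := by
  have hφ' : ContDiff ℝ ∞ φ := hφ.of_le (by simp)
  obtain ⟨p, hp2⟩ : ∃ p : ℝ, deriv (deriv φ) 0 = 2 * p :=
    ⟨deriv (deriv φ) 0 / 2, by ring⟩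
  obtain ⟨q, hq6⟩ : ∃ q : ℝ, iteratedDeriv 3 φ 0 = 6 * q :=
    ⟨iteratedDeriv 3 φ 0 / 6, by ring⟩
  set P : ℝ → ℝ := fun y => a * y + p * y ^ 2 + q * y ^ 3 with hPdef
  set E : ℝ → ℝ := fun y => φ y - P y with hEdef
  -- derivatives of P
  have hP1 : ∀ y : ℝ, HasDerivAt P (a + 2 * p * y + 3 * q * y ^ 2) y := by
    intro y
    have h1 : HasDerivAt (fun z : ℝ => a * z + p * z ^ 2 + q * z ^ 3)
        (a * 1 + p * ((2:ℕ) * y ^ (2 - 1)) + q * ((3:ℕ) * y ^ (3 - 1))) y :=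
      (((hasDerivAt_id' y).const_mul a).add ((hasDerivAt_pow 2 y).const_mul p)).add
        ((hasDerivAt_pow 3 y).const_mul q)
    have h2 : a * 1 + p * ((2:ℕ) * y ^ (2 - 1)) + q * ((3:ℕ) * y ^ (3 - 1))
        = a + 2 * p * y + 3 * q * y ^ 2 := by push_cast; ring
    rw [hPdef]
    exact h2 ▸ h1
  have hP2 : ∀ y : ℝ, HasDerivAt (fun y => a + 2 * p * y + 3 * q * y ^ 2)
      (2 * p + 6 * q * y) y := by
    intro y
    have h1 : HasDerivAt (fun z : ℝ => a + 2 * p * z + 3 * q * z ^ 2)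
        (0 + 2 * p * 1 + 3 * q * ((2:ℕ) * y ^ (2 - 1))) y :=
      ((hasDerivAt_const y a).add ((hasDerivAt_id' y).const_mul (2 * p))).add
        ((hasDerivAt_pow 2 y).const_mul (3 * q))
    have h2 : 0 + 2 * p * 1 + 3 * q * ((2:ℕ) * y ^ (2 - 1)) = 2 * p + 6 * q * y := by
      push_cast; ring
    exact h2 ▸ h1
  have hP3 : ∀ y : ℝ, HasDerivAt (fun y => 2 * p + 6 * q * y) (6 * q) y := by
    intro y
    have h1 : HasDerivAt (fun z : ℝ => 2 * p + 6 * q * z) (0 + 6 * q * 1) y :=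
      (hasDerivAt_const y (2 * p)).add ((hasDerivAt_id' y).const_mul (6 * q))
    simpa using h1
  -- differentiability of φ and its derivatives
  have hdφ : Differentiable ℝ φ := hφ'.differentiable (by simp)
  have hφd1 : ContDiff ℝ ∞ (deriv φ) := by
    have : ContDiff ℝ ∞ (deriv^[1] φ) := ContDiff.iterate_deriv 1 hφ'
    simpa using this
  have hdφ1 : Differentiable ℝ (deriv φ) := hφd1.differentiable (by simp)
  have hφd2 : ContDiff ℝ ∞ (deriv (deriv φ)) := by
    have : ContDiff ℝ ∞ (deriv^[2] φ) := ContDiff.iterate_deriv 2 hφ'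
    simpa [Function.iterate_succ, Function.comp] using this
  have hdφ2 : Differentiable ℝ (deriv (deriv φ)) := hφd2.differentiable (by simp)
  -- derivatives of E
  have hE1 : deriv E = fun y => deriv φ y - (a + 2 * p * y + 3 * q * y ^ 2) := by
    funext y
    rw [hEdef]
    rw [deriv_fun_sub (hdφ y) (hP1 y).differentiableAt]
    rw [(hP1 y).deriv]
  have hE2 : deriv (deriv E) = fun y => deriv (deriv φ) y - (2 * p + 6 * q * y) := by
    rw [hE1]; funext y
    rw [deriv_fun_sub (hdφ1 y) (hP2 y).differentiableAt, (hP2 y).deriv]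
  have hE3 : deriv (deriv (deriv E)) = fun y => deriv (deriv (deriv φ)) y - 6 * q := by
    rw [hE2]; funext y
    rw [deriv_fun_sub (hdφ2 y) (hP3 y).differentiableAt, (hP3 y).deriv]
  have hPsmooth : ContDiff ℝ ∞ P := by
    rw [hPdef]
    exact ((contDiff_const.mul contDiff_id).add
      (contDiff_const.mul (contDiff_id.pow 2))).add (contDiff_const.mul (contDiff_id.pow 3))
  have hEsmooth : ContDiff ℝ ∞ E := hφ'.sub hPsmooth
  have hit3 : iteratedDeriv 3 φ = deriv (deriv (deriv φ)) := by
    rw [show (3:ℕ) = 2 + 1 from rfl, iteratedDeriv_succ,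
      show (2:ℕ) = 1 + 1 from rfl, iteratedDeriv_succ, iteratedDeriv_one]
  -- E = o(y^3)
  have hEo : E =o[𝓝 (0:ℝ)] fun y => y ^ 3 := by
    apply littleo_of_derivs 3 E hEsmooth
    intro k hk
    interval_cases k
    · simp [iteratedDeriv_zero, hEdef, hPdef, hφ0]
    · rw [iteratedDeriv_one, hE1]; simp [hφ1]
    · rw [show (2:ℕ) = 1 + 1 from rfl, iteratedDeriv_succ, iteratedDeriv_one, hE2]
      simp [hp2]
    · rw [show (3:ℕ) = 2 + 1 from rfl, iteratedDeriv_succ,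
        show (2:ℕ) = 1 + 1 from rfl, iteratedDeriv_succ, iteratedDeriv_one, hE3]
      simp only [← hit3, hq6]
      simp
  -- basic big-O facts near 0
  have hsmall : ∀ᶠ y : ℝ in 𝓝 0, |y| ≤ 1 := by
    have h1 : ∀ᶠ y : ℝ in 𝓝 0, y ∈ Set.Icc (-1:ℝ) 1 := by
      apply Icc_mem_nhds <;> norm_num
    filter_upwards [h1] with y hy
    rw [abs_le]; exact ⟨hy.1, hy.2⟩
  have hyy : (fun y : ℝ => y * y) =O[𝓝 (0:ℝ)] fun y => y := by
    rw [isBigO_iff]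
    refine ⟨1, ?_⟩
    filter_upwards [hsmall] with y hy
    rw [Real.norm_eq_abs, Real.norm_eq_abs, abs_mul, one_mul]
    exact mul_le_of_le_one_left (abs_nonneg y) hy
  have hy31 : (fun y : ℝ => y ^ 3) =O[𝓝 (0:ℝ)] fun y => y := by
    rw [isBigO_iff]
    refine ⟨1, ?_⟩
    filter_upwards [hsmall] with y hy
    rw [Real.norm_eq_abs, Real.norm_eq_abs, abs_pow, one_mul]
    exact pow_le_of_le_one (abs_nonneg y) hy (by norm_num)
  have hy43 : (fun y : ℝ => y ^ 4) =O[𝓝 (0:ℝ)] fun y => y ^ 3 := by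
    rw [isBigO_iff]
    refine ⟨1, ?_⟩
    filter_upwards [hsmall] with y hy
    rw [Real.norm_eq_abs, Real.norm_eq_abs, abs_pow, abs_pow, one_mul,
      show (4:ℕ) = 3 + 1 from rfl, pow_succ]
    exact mul_le_of_le_one_right (pow_nonneg (abs_nonneg y) 3) hy
  -- φ = O(y)
  have hφO : φ =O[𝓝 (0:ℝ)] fun y => y := by
    have h1 := (hdφ 0).hasFDerivAt.isBigO_sub
    simp only [sub_zero, hφ0] at h1
    exact h1
  have hEO : E =O[𝓝 (0:ℝ)] fun y => y := hEo.isBigO.trans hy31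
  have hPO : P =O[𝓝 (0:ℝ)] fun y => y := by
    have h1 : P = fun y => φ y - E y := by funext y; rw [hEdef]; ring
    rw [h1]; exact hφO.sub hEO
  have hyO : (fun y : ℝ => y) =O[𝓝 (0:ℝ)] fun y => y := isBigO_refl _ _
  have hsq : ∀ u v : ℝ → ℝ, u =O[𝓝 (0:ℝ)] (fun y => y) → v =O[𝓝 (0:ℝ)] (fun y => y) →
      (fun y => u y * v y) =O[𝓝 (0:ℝ)] fun y => y :=
    fun u v hu hv => (hu.mul hv).trans hyy
  -- master: o(y^3) * O(y) = o(y^4)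
  have hmul : ∀ u v : ℝ → ℝ, u =o[𝓝 (0:ℝ)] (fun y => y ^ 3) → v =O[𝓝 (0:ℝ)] (fun y => y) →
      (fun y => u y * v y) =o[𝓝 (0:ℝ)] fun y => y ^ 4 := by
    intro u v hu hv
    have h1 := hu.mul_isBigO hv
    exact h1.congr' EventuallyEq.rfl (by filter_upwards with y; ring)
  have hEy : (fun y => E y * y) =o[𝓝 (0:ℝ)] fun y => y ^ 3 := by
    have h1 := hEo.mul_isBigO hyO
    have h2 : (fun y : ℝ => y ^ 3 * y) =O[𝓝 (0:ℝ)] fun y => y ^ 3 :=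
      hy43.congr' (by filter_upwards with y; ring) EventuallyEq.rfl
    exact h1.trans_isBigO h2
  -- difference terms
  have ht2 : (fun y => φ y ^ 2 - P y ^ 2) =o[𝓝 (0:ℝ)] fun y => y ^ 4 := by
    have h1 := hmul E (fun y => φ y + P y) hEo (hφO.add hPO)
    exact h1.congr' (by filter_upwards with y; rw [hEdef]; ring) EventuallyEq.rfl
  have ht3 : (fun y => φ y ^ 3 - P y ^ 3) =o[𝓝 (0:ℝ)] fun y => y ^ 4 := by
    have h1 := hmul E (fun y => φ y * φ y + φ y * P y + P y * P y) hEo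
      (((hsq _ _ hφO hφO).add (hsq _ _ hφO hPO)).add (hsq _ _ hPO hPO))
    exact h1.congr' (by filter_upwards with y; rw [hEdef]; ring) EventuallyEq.rfl
  have ht4 : (fun y => φ y ^ 4 - P y ^ 4) =o[𝓝 (0:ℝ)] fun y => y ^ 4 := by
    have h1 := hmul E (fun y => φ y * (φ y * φ y) + φ y * (φ y * P y) + φ y * (P y * P y)
      + P y * (P y * P y)) hEo
      ((((hsq _ _ hφO (hsq _ _ hφO hφO)).add (hsq _ _ hφO (hsq _ _ hφO hPO))).add
        (hsq _ _ hφO (hsq _ _ hPO hPO))).add (hsq _ _ hPO (hsq _ _ hPO hPO)))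
    exact h1.congr' (by filter_upwards with y; rw [hEdef]; ring) EventuallyEq.rfl
  have ht1y2 : (fun y => (φ y - P y) * y ^ 2) =o[𝓝 (0:ℝ)] fun y => y ^ 4 := by
    have h1 := hmul E (fun y => y * y) hEo hyy
    exact h1.congr' (by filter_upwards with y; rw [hEdef]; ring) EventuallyEq.rfl
  have ht1y3 : (fun y => (φ y - P y) * y ^ 3) =o[𝓝 (0:ℝ)] fun y => y ^ 4 := by
    have h1 := hmul E (fun y => y * (y * y)) hEo (hsq _ _ hyO hyy)
    exact h1.congr' (by filter_upwards with y; rw [hEdef]; ring) EventuallyEq.rfl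
  have ht2y : (fun y => (φ y ^ 2 - P y ^ 2) * y) =o[𝓝 (0:ℝ)] fun y => y ^ 4 := by
    have h1 := hmul (fun y => E y * y) (fun y => φ y + P y) hEy (hφO.add hPO)
    exact h1.congr' (by filter_upwards with y; rw [hEdef]; ring) EventuallyEq.rfl
  have ht3y : (fun y => (φ y ^ 3 - P y ^ 3) * y) =o[𝓝 (0:ℝ)] fun y => y ^ 4 := by
    have h1 := hmul (fun y => E y * y) (fun y => φ y * φ y + φ y * P y + P y * P y) hEy
      (((hsq _ _ hφO hφO).add (hsq _ _ hφO hPO)).add (hsq _ _ hPO hPO))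
    exact h1.congr' (by filter_upwards with y; rw [hEdef]; ring) EventuallyEq.rfl
  have ht2y2 : (fun y => (φ y ^ 2 - P y ^ 2) * y ^ 2) =o[𝓝 (0:ℝ)] fun y => y ^ 4 := by
    have h1 := hmul (fun y => E y * y) (fun y => (φ y + P y) * y) hEy
      (hsq _ _ (hφO.add hPO) hyO)
    exact h1.congr' (by filter_upwards with y; rw [hEdef]; ring) EventuallyEq.rfl
  -- the full difference D
  set D : ℝ → ℝ := fun y => (φ y ^ 2 - P y ^ 2) + b0 * (φ y ^ 3 - P y ^ 3)
    + b1 * ((φ y ^ 2 - P y ^ 2) * y) + b2 * ((φ y - P y) * y ^ 2)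
    + c0 * (φ y ^ 4 - P y ^ 4) + c1 * ((φ y ^ 3 - P y ^ 3) * y)
    + c2 * ((φ y ^ 2 - P y ^ 2) * y ^ 2) + c3 * ((φ y - P y) * y ^ 3) with hDdef
  have hDo : D =o[𝓝 (0:ℝ)] fun y => y ^ 4 := by
    rw [hDdef]
    exact ((((((ht2.add (ht3.const_mul_left b0)).add (ht2y.const_mul_left b1)).add
      (ht1y2.const_mul_left b2)).add (ht4.const_mul_left c0)).add
      (ht3y.const_mul_left c1)).add (ht2y2.const_mul_left c2)).add
      (ht1y3.const_mul_left c3)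
  -- R(φ y, y) = o(y^4)
  have hRo4 : (fun y => R (φ y) y) =o[𝓝 (0:ℝ)] fun y => y ^ 4 := by
    have hk : Filter.Tendsto (fun y : ℝ => ((φ y, y) : ℝ × ℝ)) (𝓝 0) (𝓝 (0 : ℝ × ℝ)) := by
      have h1 : Filter.Tendsto φ (𝓝 (0:ℝ)) (𝓝 (0:ℝ)) := by
        have h2 := hφ.continuous.tendsto 0
        rwa [hφ0] at h2
      have h3 := h1.prodMk_nhds (tendsto_id (x := 𝓝 (0:ℝ)))
      exact h3
    have h1 := hRo.comp_tendsto hk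
    have h2 : (fun y : ℝ => ‖((φ y, y) : ℝ × ℝ)‖ ^ 4) =O[𝓝 (0:ℝ)] fun y => y ^ 4 := by
      have hn : (fun y : ℝ => ‖((φ y, y) : ℝ × ℝ)‖) =O[𝓝 (0:ℝ)] fun y => y :=
        (hφO.prod_left hyO).norm_left
      exact hn.pow 4
    exact h1.trans_isBigO h2
  -- the polynomial part is o(y^4)
  set A3 : ℝ := b3 + a*b2 + 2*a*p + a^2*b1 + a^3*b0 with hA3def
  set A4 : ℝ := c4 + p*b2 + p^2 + a*c3 + 2*a*q + 2*a*p*b1 + a^2*c2 + 3*a^2*p*b0 + a^3*c1 + a^4*c0 with hA4def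
  set S : ℝ → ℝ := fun y => (q*b2 + p*c3 + 2*p*q + p^2*b1 + 2*a*q*b1 + 2*a*p*c2 + 3*a*p^2*b0 + 3*a^2*q*b0 + 3*a^2*p*c1 + 4*a^3*p*c0) * y^1 + (q*c3 + q^2 + 2*p*q*b1 + p^2*c2 + p^3*b0 + 2*a*q*c2 + 6*a*p*q*b0 + 3*a*p^2*c1 + 3*a^2*q*c1 + 6*a^2*p^2*c0 + 4*a^3*q*c0) * y^2 + (q^2*b1 + 2*p*q*c2 + 3*p^2*q*b0 + p^3*c1 + 3*a*q^2*b0 + 6*a*p*q*c1 + 4*a*p^3*c0 + 12*a^2*p*q*c0) * y^3 + (q^2*c2 + 3*p*q^2*b0 + 3*p^2*q*c1 + p^4*c0 + 3*a*q^2*c1 + 12*a*p^2*q*c0 + 6*a^2*q^2*c0) * y^4 + (q^3*b0 + 3*p*q^2*c1 + 4*p^3*q*c0 + 12*a*p*q^2*c0) * y^5 + (q^3*c1 + 6*p^2*q^2*c0 + 4*a*q^3*c0) * y^6 + (4*p*q^3*c0) * y^7 + (q^4*c0) * y^8 with hSdef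
  have key : (fun y => A3 * y ^ 3 + A4 * y ^ 4 + y ^ 4 * S y)
      =ᶠ[𝓝 (0:ℝ)] fun y => -(D y) - R (φ y) y := by
    filter_upwards [hbranch] with y hy
    rw [hfR] at hy
    simp only [hA3def, hA4def, hSdef, hDdef, hPdef]
    linear_combination hy
  have hPolyo : (fun y => A3 * y ^ 3 + A4 * y ^ 4 + y ^ 4 * S y) =o[𝓝 (0:ℝ)]
      fun y => y ^ 4 := by
    have h1 : (fun y => -(D y) - R (φ y) y) =o[𝓝 (0:ℝ)] fun y => y ^ 4 :=
      hDo.neg_left.sub hRo4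
    exact h1.congr' key.symm EventuallyEq.rfl
  -- strip the tail y^4 * S y
  have hSo : (fun y => y ^ 4 * S y) =o[𝓝 (0:ℝ)] fun y => y ^ 4 := by
    have hS0 : Filter.Tendsto S (𝓝 (0:ℝ)) (𝓝 0) := by
      have hc : Continuous S := by rw [hSdef]; continuity
      have h1 := hc.tendsto 0
      have hS00 : S 0 = 0 := by rw [hSdef]; norm_num
      rwa [hS00] at h1
    have h1 : S =o[𝓝 (0:ℝ)] (fun _ => (1:ℝ)) := (isLittleO_one_iff ℝ).mpr hS0
    have h2 := (isBigO_refl (fun y : ℝ => y ^ 4) (𝓝 (0:ℝ))).mul_isLittleO h1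
    exact h2.congr' EventuallyEq.rfl (by filter_upwards with y; ring)
  have h34 : (fun y => A3 * y ^ 3 + A4 * y ^ 4) =o[𝓝 (0:ℝ)] fun y => y ^ 4 := by
    have h1 := hPolyo.sub hSo
    exact h1.congr' (by filter_upwards with y; ring) EventuallyEq.rfl
  -- extract A3 = 0
  have hA4y3 : (fun y => A4 * y ^ 4) =o[𝓝 (0:ℝ)] fun y => y ^ 3 := by
    have h1 : (fun y : ℝ => A4 * y) =o[𝓝 (0:ℝ)] (fun _ => (1:ℝ)) := by
      rw [isLittleO_one_iff ℝ]
      have h2 : Filter.Tendsto (fun y : ℝ => A4 * y) (𝓝 0) (𝓝 (A4 * 0)) :=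
        (continuous_const.mul continuous_id).tendsto 0
      simpa using h2
    have h2 := (isBigO_refl (fun y : ℝ => y ^ 3) (𝓝 (0:ℝ))).mul_isLittleO h1
    exact h2.congr' (by filter_upwards with y; ring) (by filter_upwards with y; ring)
  have hA3z : A3 = 0 := by
    apply coeff_eq_zero A3 3
    have h1 := (h34.trans_isBigO hy43).sub hA4y3
    exact h1.congr' (by filter_upwards with y; ring) EventuallyEq.rfl
  have hA4z : A4 = 0 := by
    apply coeff_eq_zero A4 4
    have h1 := h34
    rw [hA3z] at h1
    exact h1.congr' (by filter_upwards with y; ring) EventuallyEq.rfl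
  -- final algebra
  have ha' : a ≠ 0 := ne_of_gt ha
  rw [hA3def] at hA3z
  rw [hA4def] at hA4z
  constructor
  · rw [hp2]
    field_simp
    linarith [hA3z]
  · rw [hq6]
    have h8 : (8 * a ^ 3 : ℝ) ≠ 0 := by positivity
    rw [one_div, inv_mul_eq_div, eq_div_iff h8]
    linear_combination (-5*b0*a^3 - 3*b1*a^2 - b2*a + b3 - 2*a*p) * hA3z + (4*a^2) * hA4z
end

section
/- Let f(x,y) = x² − a²y² + cubic terms + h.o.t. with a > 0, and suppose x = a y + x₂ y² + x₃ y³ + ... parametrizes a smooth branch of the inflexion set I_f = 0 through the origin tangent to x = a y. Then x₂ = 0; i.e. the branch of the inflexion curve tangent to x = ay itself has an inflexion at the origin (its second-order Taylor coefficient vanishes). -/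
open Topology Asymptotics Filter

noncomputable def pd (v : ℝ × ℝ) (G : ℝ × ℝ → ℝ) : ℝ × ℝ → ℝ := fun p => fderiv ℝ G p v

lemma pd_contDiff {G : ℝ × ℝ → ℝ} (hG : ContDiff ℝ (⊤ : ℕ∞) G) (v : ℝ × ℝ) :
    ContDiff ℝ (⊤ : ℕ∞) (pd v G) :=
  (ContinuousLinearMap.apply ℝ ℝ v).contDiff.comp (hG.fderiv_right (by simp))

lemma hasDerivAt_line {G : ℝ × ℝ → ℝ} (hG : ContDiff ℝ (⊤ : ℕ∞) G) (p v : ℝ × ℝ) (t : ℝ) :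
    HasDerivAt (fun s => G (p + s • v)) (pd v G (p + t • v)) t := by
  have hline : HasDerivAt (fun s : ℝ => p + s • v) v t := by
    simpa using ((hasDerivAt_id t).smul_const v).const_add p
  exact ((hG.differentiable (by simp) (p + t • v)).hasFDerivAt).comp_hasDerivAt t hline

lemma abs_le_of_mem_uIcc {x s : ℝ} (hx : x ∈ Set.uIcc 0 s) : |x| ≤ |s| := by
  rcases Set.mem_uIcc.mp hx with ⟨h1, h2⟩ | ⟨h1, h2⟩ <;> rw [abs_le] <;>
    constructor <;> nlinarith [le_abs_self s, neg_abs_le s]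

lemma mvt_uIcc {g g' : ℝ → ℝ} {C s : ℝ}
    (hd : ∀ x ∈ Set.uIcc 0 s, HasDerivAt g (g' x) x)
    (hb : ∀ x ∈ Set.uIcc 0 s, |g' x| ≤ C) : |g s - g 0| ≤ C * |s| := by
  simpa using Convex.norm_image_sub_le_of_norm_hasDerivWithin_le
    (fun x hx => (hd x hx).hasDerivWithinAt) hb (convex_uIcc 0 s)
    Set.left_mem_uIcc Set.right_mem_uIcc

lemma norm_line_le {p v : ℝ × ℝ} (hp : ‖p‖ ≤ 1) (hv : ‖v‖ ≤ 1) {x : ℝ} (hx : |x| ≤ 1) :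
    ‖p + x • v‖ ≤ 2 := by
  calc ‖p + x • v‖ ≤ ‖p‖ + ‖x • v‖ := norm_add_le _ _
    _ ≤ 1 + 1 * 1 := by
        refine add_le_add hp ?_
        rw [norm_smul]
        exact mul_le_mul hx hv (norm_nonneg v) zero_le_one
    _ = 2 := by norm_num

lemma taylor_line {H : ℝ × ℝ → ℝ} (hH : ContDiff ℝ (⊤ : ℕ∞) H) (w : ℝ × ℝ) (hw : ‖w‖ ≤ 1)
    {M : ℝ} (hM : ∀ q : ℝ × ℝ, ‖q‖ ≤ 2 → |pd w (pd w H) q| ≤ M)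
    {p : ℝ × ℝ} (hp : ‖p‖ ≤ 1) {s : ℝ} (hs0 : 0 ≤ s) (hs1 : s ≤ 1) :
    |H (p + s • w) - H p - s * pd w H p| ≤ M * s ^ 2 := by
  have habs : ∀ x ∈ Set.uIcc 0 s, |x| ≤ 1 := fun x hx =>
    (abs_le_of_mem_uIcc hx).trans (by rwa [abs_of_nonneg hs0])
  -- Step A : increment bound on pd w H
  have stepA : ∀ x ∈ Set.uIcc 0 s, |pd w H (p + x • w) - pd w H p| ≤ M * s := by
    intro x hx
    have h1 : |pd w H (p + x • w) - pd w H (p + (0:ℝ) • w)| ≤ M * |x| := by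
      refine mvt_uIcc (g := fun σ => pd w H (p + σ • w)) (g' := fun σ => pd w (pd w H) (p + σ • w)) ?_ ?_
      · intro σ _; exact hasDerivAt_line (pd_contDiff hH w) p w σ
      · intro σ hσ
        exact hM _ (norm_line_le hp hw ((abs_le_of_mem_uIcc hσ).trans (habs x hx)))
    have h2 : M * |x| ≤ M * s := by
      have hM0 : 0 ≤ M := le_trans (abs_nonneg _) (hM p (by simpa using norm_line_le hp hw (x := 0) (by norm_num)))
      refine mul_le_mul_of_nonneg_left ?_ hM0
      exact (abs_le_of_mem_uIcc hx).trans_eq (abs_of_nonneg hs0)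
    simpa using h1.trans h2
  -- outer MVT
  have key : |(H (p + s • w) - H p - s * pd w H p) - (H (p + (0:ℝ) • w) - H p - 0 * pd w H p)|
      ≤ M * s * |s| := by
    refine mvt_uIcc (g := fun σ => H (p + σ • w) - H p - σ * pd w H p)
      (g' := fun σ => pd w H (p + σ • w) - pd w H p) ?_ stepA
    intro σ _
    have := ((hasDerivAt_line hH p w σ).sub_const (H p)).sub
      ((hasDerivAt_id σ).mul_const (pd w H p))
    simpa [Pi.sub_def] using this
  have : |H (p + s • w) - H p - s * pd w H p| ≤ M * s * |s| := by simpa using key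
  calc |H (p + s • w) - H p - s * pd w H p| ≤ M * s * |s| := this
    _ = M * s ^ 2 := by rw [abs_of_nonneg hs0]; ring

lemma pd_neg (G : ℝ × ℝ → ℝ) (v : ℝ × ℝ) : pd (-v) G = fun q => -(pd v G q) := by
  funext q; simp [pd]

lemma pd_neg_neg {G : ℝ × ℝ → ℝ} (v : ℝ × ℝ) :
    pd (-v) (pd (-v) G) = pd v (pd v G) := by
  funext q
  simp only [pd_neg]
  show -(fderiv ℝ (fun q => -pd v G q) q) v = (fderiv ℝ (pd v G) q) v
  rw [fderiv_fun_neg]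
  simp

lemma central_diff {G : ℝ × ℝ → ℝ} (hG : ContDiff ℝ (⊤ : ℕ∞) G) (v : ℝ × ℝ) (hv : ‖v‖ ≤ 1)
    {M : ℝ} (hM : ∀ q : ℝ × ℝ, ‖q‖ ≤ 2 → |pd v (pd v (pd v G)) q| ≤ M)
    {p : ℝ × ℝ} (hp : ‖p‖ ≤ 1) {t : ℝ} (ht0 : 0 ≤ t) (ht1 : t ≤ 1) :
    |G (p + t • v) - G (p - t • v) - 2 * t * pd v G p| ≤ 2 * M * t ^ 3 := by
  set H := pd v G with hHdef
  have hH : ContDiff ℝ (⊤ : ℕ∞) H := pd_contDiff hG v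
  have hMneg : ∀ q : ℝ × ℝ, ‖q‖ ≤ 2 → |pd (-v) (pd (-v) H) q| ≤ M := by
    intro q hq; rw [pd_neg_neg]; exact hM q hq
  have habs : ∀ x ∈ Set.uIcc 0 t, |x| ≤ 1 := fun x hx =>
    (abs_le_of_mem_uIcc hx).trans (by rwa [abs_of_nonneg ht0])
  -- derivative bound for outer function
  have stepB : ∀ s ∈ Set.uIcc 0 t, |H (p + s • v) + H (p - s • v) - 2 * H p| ≤ 2 * M * t ^ 2 := by
    intro s hs
    have hs0 : 0 ≤ s := by
      rcases Set.mem_uIcc.mp hs with ⟨h1, _⟩ | ⟨_, h2⟩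
      · exact h1
      · linarith
    have hs1 : s ≤ 1 := by have := habs s hs; rwa [abs_of_nonneg hs0] at this
    have h1 := taylor_line hH v hv hM hp hs0 hs1
    have h2 := taylor_line hH (-v) (by simpa using hv) hMneg hp hs0 hs1
    rw [pd_neg] at h2
    have hst : s ^ 2 ≤ t ^ 2 := by
      have hts : s ≤ t := by
        rcases Set.mem_uIcc.mp hs with ⟨_, h⟩ | ⟨h, h'⟩
        · exact h
        · linarith
      nlinarith
    have hM0 : 0 ≤ M := le_trans (abs_nonneg _)
      (hM p (by simpa using norm_line_le hp hv (x := 0) (by norm_num)))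
    have e2 : p + s • (-v) = p - s • v := by simp [smul_neg, sub_eq_add_neg]
    rw [e2] at h2
    calc |H (p + s • v) + H (p - s • v) - 2 * H p|
        = |(H (p + s • v) - H p - s * pd v H p) + (H (p - s • v) - H p - s * -(pd v H p))| := by
          ring_nf
      _ ≤ |H (p + s • v) - H p - s * pd v H p| + |H (p - s • v) - H p - s * -(pd v H p)| :=
          abs_add_le _ _
      _ ≤ M * s ^ 2 + M * s ^ 2 := add_le_add h1 h2
      _ ≤ 2 * M * t ^ 2 := by nlinarith
  -- outer MVT
  have key : |(G (p + t • v) - G (p - t • v) - 2 * t * H p) -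
      (G (p + (0:ℝ) • v) - G (p - (0:ℝ) • v) - 2 * 0 * H p)| ≤ (2 * M * t ^ 2) * |t| := by
    refine mvt_uIcc (g := fun s => G (p + s • v) - G (p - s • v) - 2 * s * H p)
      (g' := fun s => H (p + s • v) + H (p - s • v) - 2 * H p) ?_ stepB
    intro s _
    have d1 : HasDerivAt (fun s : ℝ => G (p + s • v)) (H (p + s • v)) s :=
      hasDerivAt_line hG p v s
    have d2 : HasDerivAt (fun s : ℝ => G (p - s • v)) (-H (p - s • v)) s := by
      have := hasDerivAt_line hG p (-v) s
      rw [pd_neg] at this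
      have e : ∀ σ : ℝ, p + σ • (-v) = p - σ • v := by intro σ; simp [smul_neg, sub_eq_add_neg]
      simp only [e] at this
      exact this
    have d3 : HasDerivAt (fun s : ℝ => 2 * s * H p) (2 * H p) s := by
      simpa using ((hasDerivAt_id s).const_mul 2).mul_const (H p)
    have := (d1.fun_sub d2).fun_sub d3
    exact this.congr_deriv (by ring)
  have : |G (p + t • v) - G (p - t • v) - 2 * t * H p| ≤ (2 * M * t ^ 2) * |t| := by
    simpa using key
  calc |G (p + t • v) - G (p - t • v) - 2 * t * pd v G p| ≤ (2 * M * t ^ 2) * |t| := this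
    _ = 2 * M * t ^ 3 := by rw [abs_of_nonneg ht0]; ring

lemma pd_zero_of_isLittleO {G : ℝ × ℝ → ℝ} (hG : ContDiff ℝ (⊤ : ℕ∞) G)
    (h : G =o[𝓝 (0 : ℝ × ℝ)] fun p => ‖p‖) (v : ℝ × ℝ) : pd v G 0 = 0 := by
  have hG0 : G 0 = 0 := by
    have := (h.def one_pos).self_of_nhds
    simpa using this
  have h' : G =o[𝓝 (0 : ℝ × ℝ)] fun p => p := isLittleO_norm_right.mp h
  have hd : HasFDerivAt G (0 : ℝ × ℝ →L[ℝ] ℝ) 0 := by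
    rw [hasFDerivAt_iff_isLittleO_nhds_zero]
    simpa [hG0] using h'
  simp [pd, hd.fderiv]

lemma key_littleO {G : ℝ × ℝ → ℝ} (hG : ContDiff ℝ (⊤ : ℕ∞) G) (v : ℝ × ℝ) (hv : ‖v‖ ≤ 1)
    {k : ℕ} (hk1 : 1 ≤ k) (hk3 : k ≤ 3) (h : G =o[𝓝 (0 : ℝ × ℝ)] fun p => ‖p‖ ^ k) :
    (pd v G) =o[𝓝 (0 : ℝ × ℝ)] fun p => ‖p‖ ^ (k - 1) := by
  -- G is o(‖p‖)
  have hnorm_bigO : (fun p : ℝ × ℝ => ‖p‖ ^ k) =O[𝓝 (0 : ℝ × ℝ)] fun p => ‖p‖ := by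
    rw [Asymptotics.isBigO_iff]
    refine ⟨1, ?_⟩
    have hev : ∀ᶠ p : ℝ × ℝ in 𝓝 0, ‖p‖ < 1 := by
      have : Metric.ball (0 : ℝ × ℝ) 1 ∈ 𝓝 (0 : ℝ × ℝ) := Metric.ball_mem_nhds _ one_pos
      filter_upwards [this] with p hp
      simpa [mem_ball_zero_iff] using hp
    filter_upwards [hev] with p hp
    have h0 : (0:ℝ) ≤ ‖p‖ := norm_nonneg p
    have : ‖p‖ ^ k ≤ ‖p‖ ^ 1 := pow_le_pow_of_le_one h0 hp.le hk1
    simpa [abs_of_nonneg (pow_nonneg h0 k), abs_of_nonneg h0] using this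
  have hzero : pd v G 0 = 0 :=
    pd_zero_of_isLittleO hG (h.trans_isBigO hnorm_bigO) v
  -- bound on третья derivative
  obtain ⟨C, hC⟩ := (isCompact_closedBall (0 : ℝ × ℝ) 2).exists_bound_of_continuousOn
    (((pd_contDiff (pd_contDiff (pd_contDiff hG v) v) v).continuous).continuousOn)
  set M : ℝ := max C 0 with hMdef
  have hM : ∀ q : ℝ × ℝ, ‖q‖ ≤ 2 → |pd v (pd v (pd v G)) q| ≤ M := by
    intro q hq
    have : q ∈ Metric.closedBall (0 : ℝ × ℝ) 2 := by simpa [Metric.mem_closedBall] using hq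
    exact (hC q this).trans (le_max_left _ _)
  have hM0 : (0:ℝ) ≤ M := le_max_right _ _
  rw [Asymptotics.isLittleO_iff]
  intro c hc
  set η : ℝ := min 1 (Real.sqrt (c / (2 * (M + 1)))) with hηdef
  have hM1 : (0:ℝ) < M + 1 := by linarith
  have hη0 : 0 < η := by
    apply lt_min one_pos
    exact Real.sqrt_pos.mpr (by positivity)
  have hη1 : η ≤ 1 := min_le_left _ _
  have hη2 : M * η ^ 2 ≤ c / 2 := by
    have h1 : η ≤ Real.sqrt (c / (2 * (M + 1))) := min_le_right _ _
    have h2 : η ^ 2 ≤ c / (2 * (M + 1)) := by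
      have := Real.sq_sqrt (le_of_lt (show (0:ℝ) < c / (2 * (M + 1)) by positivity))
      nlinarith [Real.sqrt_nonneg (c / (2 * (M + 1)))]
    calc M * η ^ 2 ≤ (M + 1) * (c / (2 * (M + 1))) := by nlinarith
      _ = c / 2 := by field_simp
  set ε : ℝ := c * η / 16 with hεdef
  have hε0 : 0 < ε := by positivity
  obtain ⟨δ₁, hδ₁0, hδ₁⟩ := Metric.eventually_nhds_iff.mp (h.def hε0)
  have hball : Metric.ball (0 : ℝ × ℝ) (min 1 (δ₁ / 2)) ∈ 𝓝 (0 : ℝ × ℝ) :=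
    Metric.ball_mem_nhds _ (lt_min one_pos (by positivity))
  filter_upwards [hball] with p hp
  rw [mem_ball_zero_iff] at hp
  have hp1 : ‖p‖ ≤ 1 := le_of_lt (lt_of_lt_of_le hp (min_le_left _ _))
  have hpδ : ‖p‖ < δ₁ / 2 := lt_of_lt_of_le hp (min_le_right _ _)
  have hRHS : ‖‖p‖ ^ (k-1)‖ = ‖p‖ ^ (k-1) := abs_of_nonneg (pow_nonneg (norm_nonneg p) _)
  rcases eq_or_ne p 0 with rfl | hpne
  · rw [hzero]
    simp only [norm_zero]
    positivity
  · have hpn0 : 0 < ‖p‖ := norm_pos_iff.mpr hpne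
    set t : ℝ := η * ‖p‖ with htdef
    have ht0 : 0 ≤ t := by positivity
    have ht1 : t ≤ 1 := by
      calc t ≤ 1 * 1 := mul_le_mul hη1 hp1 (norm_nonneg p) zero_le_one
        _ = 1 := by norm_num
    have hcd := central_diff hG v hv hM hp1 ht0 ht1
    -- bounds on G at the two points
    have hGbound : ∀ q : ℝ × ℝ, ‖q‖ ≤ 2 * ‖p‖ → |G q| ≤ ε * (2 * ‖p‖) ^ k := by
      intro q hq
      have hqδ : dist q 0 < δ₁ := by
        rw [dist_zero_right]
        calc ‖q‖ ≤ 2 * ‖p‖ := hq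
          _ < 2 * (δ₁ / 2) := by linarith
          _ = δ₁ := by ring
      have := hδ₁ hqδ
      simp only [Real.norm_eq_abs] at this
      calc |G q| ≤ ε * |‖q‖ ^ k| := this
        _ = ε * ‖q‖ ^ k := by rw [abs_of_nonneg (pow_nonneg (norm_nonneg q) _)]
        _ ≤ ε * (2 * ‖p‖) ^ k := by
            refine mul_le_mul_of_nonneg_left ?_ hε0.le
            exact pow_le_pow_left₀ (norm_nonneg q) hq k
    have hnpt : ∀ s : ℝ, |s| ≤ t → ‖p + s • v‖ ≤ 2 * ‖p‖ := by
      intro s hs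
      have hsv : ‖s • v‖ ≤ t := by
        rw [norm_smul, Real.norm_eq_abs]
        calc |s| * ‖v‖ ≤ t * 1 := mul_le_mul hs hv (norm_nonneg v) ht0
          _ = t := mul_one t
      have htp : t ≤ ‖p‖ := by
        calc t = η * ‖p‖ := rfl
          _ ≤ 1 * ‖p‖ := mul_le_mul_of_nonneg_right hη1 (norm_nonneg p)
          _ = ‖p‖ := one_mul _
      calc ‖p + s • v‖ ≤ ‖p‖ + ‖s • v‖ := norm_add_le _ _
        _ ≤ ‖p‖ + ‖p‖ := by linarith
        _ = 2 * ‖p‖ := by ring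
    have hb1 : |G (p + t • v)| ≤ ε * (2 * ‖p‖) ^ k :=
      hGbound _ (hnpt t (by rw [abs_of_nonneg ht0]))
    have hb2 : |G (p - t • v)| ≤ ε * (2 * ‖p‖) ^ k := by
      have he : p - t • v = p + (-t) • v := by simp [sub_eq_add_neg, neg_smul]
      rw [he]
      exact hGbound _ (hnpt (-t) (by rw [abs_neg, abs_of_nonneg ht0]))
    -- combine
    have hcomb : 2 * t * |pd v G p| ≤ 2 * (ε * (2 * ‖p‖) ^ k) + 2 * M * t ^ 3 := by
      set X := G (p + t • v) with hX
      set Y := G (p - t • v) with hY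
      set Z := 2 * t * pd v G p with hZ
      have h1 : |Z| ≤ |X| + |Y| + |X - Y - Z| := by
        rw [abs_le]
        constructor <;>
          linarith [le_abs_self X, neg_abs_le X, le_abs_self Y, neg_abs_le Y,
            le_abs_self (X - Y - Z), neg_abs_le (X - Y - Z)]
      have h2 : |Z| = 2 * t * |pd v G p| := by
        rw [hZ, abs_mul, abs_of_nonneg (by positivity : (0:ℝ) ≤ 2 * t)]
      linarith [hb1, hb2, hcd, h1, h2]
    -- final bound
    have hppow : ‖p‖ ^ k = ‖p‖ ^ (k - 1) * ‖p‖ := by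
      conv_lhs => rw [show k = (k - 1) + 1 from (Nat.succ_pred_eq_of_pos hk1).symm]
      rw [pow_succ]
    have h2k : (2:ℝ) ^ k ≤ 8 := by
      calc (2:ℝ) ^ k ≤ 2 ^ 3 := pow_le_pow_right₀ (by norm_num) hk3
        _ = 8 := by norm_num
    have hpow2 : ‖p‖ ^ 2 ≤ ‖p‖ ^ (k - 1) :=
      pow_le_pow_of_le_one (norm_nonneg p) hp1 (by omega)
    have hpk : (0:ℝ) ≤ ‖p‖ ^ k := pow_nonneg (norm_nonneg p) k
    have hA : 2 * (ε * (2 * ‖p‖) ^ k) ≤ 16 * ε * ‖p‖ ^ k := by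
      rw [mul_pow]
      have h1 : (2:ℝ) ^ k * ‖p‖ ^ k ≤ 8 * ‖p‖ ^ k := mul_le_mul_of_nonneg_right h2k hpk
      have h2 : ε * (2 ^ k * ‖p‖ ^ k) ≤ ε * (8 * ‖p‖ ^ k) := mul_le_mul_of_nonneg_left h1 hε0.le
      linarith
    have hAC : 16 * ε * ‖p‖ ^ k = c * ‖p‖ ^ (k - 1) * t := by
      rw [hppow, hεdef, htdef]; ring
    have hB : 2 * M * t ^ 3 ≤ c * ‖p‖ ^ (k - 1) * t := by
      have ht2 : M * t ^ 2 ≤ (c / 2) * ‖p‖ ^ (k - 1) := by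
        have e : M * t ^ 2 = (M * η ^ 2) * ‖p‖ ^ 2 := by rw [htdef]; ring
        rw [e]
        calc (M * η ^ 2) * ‖p‖ ^ 2 ≤ (c / 2) * ‖p‖ ^ 2 :=
              mul_le_mul_of_nonneg_right hη2 (sq_nonneg _)
          _ ≤ (c / 2) * ‖p‖ ^ (k - 1) :=
              mul_le_mul_of_nonneg_left hpow2 (by positivity)
      have e3 : 2 * M * t ^ 3 = 2 * (M * t ^ 2) * t := by ring
      rw [e3]
      have := mul_le_mul_of_nonneg_right ht2 ht0
      linarith
    have key2 : 2 * t * |pd v G p| ≤ 2 * t * (c * ‖p‖ ^ (k - 1)) := by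
      calc 2 * t * |pd v G p| ≤ 2 * (ε * (2 * ‖p‖) ^ k) + 2 * M * t ^ 3 := hcomb
        _ ≤ c * ‖p‖ ^ (k - 1) * t + c * ‖p‖ ^ (k - 1) * t := by
            have := hA.trans_eq hAC
            linarith
        _ = 2 * t * (c * ‖p‖ ^ (k - 1)) := by ring
    have hfinal : |pd v G p| ≤ c * ‖p‖ ^ (k - 1) :=
      le_of_mul_le_mul_left key2 (by positivity)
    rw [Real.norm_eq_abs, hRHS]
    exact hfinal

lemma littleO_sq {ψ ψ' : ℝ → ℝ} (hd : ∀ y, HasDerivAt ψ (ψ' y) y) (h0 : ψ 0 = 0)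
    (h' : ψ' =o[𝓝 (0:ℝ)] fun y => y) : ψ =o[𝓝 (0:ℝ)] fun y => y ^ 2 := by
  rw [Asymptotics.isLittleO_iff]
  intro c hc
  obtain ⟨δ, hδ0, hδ⟩ := Metric.eventually_nhds_iff.mp (h'.def hc)
  have hball : Metric.ball (0:ℝ) δ ∈ 𝓝 (0:ℝ) := Metric.ball_mem_nhds _ hδ0
  filter_upwards [hball] with y hy
  rw [mem_ball_zero_iff, Real.norm_eq_abs] at hy
  have hmvt : |ψ y - ψ 0| ≤ (c * |y|) * |y| := by
    refine mvt_uIcc (fun x _ => hd x) ?_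
    intro x hx
    have hxy : |x| ≤ |y| := abs_le_of_mem_uIcc hx
    have hxδ : dist x 0 < δ := by rw [Real.dist_eq, sub_zero]; exact lt_of_le_of_lt hxy hy
    have := hδ hxδ
    simp only [Real.norm_eq_abs] at this
    calc |ψ' x| ≤ c * |x| := this
      _ ≤ c * |y| := mul_le_mul_of_nonneg_left hxy hc.le
  rw [h0, sub_zero] at hmvt
  calc ‖ψ y‖ ≤ (c * |y|) * |y| := hmvt
    _ = c * ‖y ^ 2‖ := by rw [Real.norm_eq_abs, abs_pow]; ring

lemma kill_cube {C : ℝ} (h : (fun y : ℝ => C * y ^ 3) =o[𝓝 (0:ℝ)] fun y => y ^ 3) :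
    C = 0 := by
  by_contra hC
  have hc : 0 < |C| / 2 := by positivity
  obtain ⟨δ, hδ0, hδ⟩ := Metric.eventually_nhds_iff.mp (h.def hc)
  have hyδ : dist (δ/2) (0:ℝ) < δ := by
    rw [Real.dist_eq, sub_zero, abs_of_pos (by positivity)]; linarith
  have := hδ hyδ
  simp only [Real.norm_eq_abs, abs_mul, abs_pow] at this
  have hpos : 0 < |δ/2| ^ 3 := by positivity
  nlinarith [abs_nonneg C]

lemma norm_prod_branch {X : ℝ → ℝ} {c : ℝ} {y : ℝ} (h : |X y| ≤ c * |y|) :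
    ‖(X y, y)‖ ≤ (max c 1) * |y| := by
  rw [Prod.norm_def]
  apply max_le
  · exact h.trans (mul_le_mul_of_nonneg_right (le_max_left _ _) (abs_nonneg _))
  · calc ‖y‖ = 1 * |y| := by rw [Real.norm_eq_abs, one_mul]
      _ ≤ (max c 1) * |y| := mul_le_mul_of_nonneg_right (le_max_right _ _) (abs_nonneg _)

lemma comp_branch {H : ℝ × ℝ → ℝ} {j : ℕ} (h : H =o[𝓝 (0 : ℝ × ℝ)] fun p => ‖p‖ ^ j)
    {X : ℝ → ℝ} (hX : Continuous X) (hX0 : X 0 = 0) {c : ℝ}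
    (hc : ∀ᶠ y in 𝓝 (0:ℝ), |X y| ≤ c * |y|) :
    (fun y => H (X y, y)) =o[𝓝 (0:ℝ)] fun y => y ^ j := by
  have htend : Filter.Tendsto (fun y : ℝ => (X y, y)) (𝓝 0) (𝓝 (0 : ℝ × ℝ)) := by
    have : Filter.Tendsto (fun y : ℝ => (X y, y)) (𝓝 0) (𝓝 (X 0, 0)) :=
      ((hX.tendsto 0).prodMk_nhds (tendsto_id))
    rwa [hX0] at this
  have h1 := h.comp_tendsto htend
  refine h1.trans_isBigO ?_
  rw [Asymptotics.isBigO_iff]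
  refine ⟨(max c 1) ^ j, ?_⟩
  filter_upwards [hc] with y hy
  have h2 : ‖(X y, y)‖ ≤ (max c 1) * |y| := norm_prod_branch hy
  have h3 : (0:ℝ) ≤ ‖(X y, y)‖ := norm_nonneg _
  calc ‖‖(X y, y)‖ ^ j‖ = ‖(X y, y)‖ ^ j := by
        rw [Real.norm_eq_abs, abs_of_nonneg (pow_nonneg h3 _)]
    _ ≤ ((max c 1) * |y|) ^ j := pow_le_pow_left₀ h3 h2 j
    _ = (max c 1) ^ j * ‖y ^ j‖ := by
        rw [mul_pow, Real.norm_eq_abs, abs_pow]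

lemma hasDerivAt_fst {G : ℝ × ℝ → ℝ} (hG : ContDiff ℝ (⊤ : ℕ∞) G) (x y : ℝ) :
    HasDerivAt (fun x' => G (x', y)) (pd (1,0) G (x,y)) x := by
  have hline : HasDerivAt (fun x' : ℝ => ((x' : ℝ), y)) ((1:ℝ), (0:ℝ)) x :=
    (hasDerivAt_id x).prodMk (hasDerivAt_const x y)
  exact (hG.differentiable (by simp) (x, y)).hasFDerivAt.comp_hasDerivAt x hline

lemma hasDerivAt_snd {G : ℝ × ℝ → ℝ} (hG : ContDiff ℝ (⊤ : ℕ∞) G) (x y : ℝ) :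
    HasDerivAt (fun y' => G (x, y')) (pd (0,1) G (x,y)) y := by
  have hline : HasDerivAt (fun y' : ℝ => ((x : ℝ), y')) ((0:ℝ), (1:ℝ)) y :=
    (hasDerivAt_const y x).prodMk (hasDerivAt_id y)
  exact (hG.differentiable (by simp) (x, y)).hasFDerivAt.comp_hasDerivAt y hline

lemma poly2_isBigO (c1 c2 : ℝ) : (fun y : ℝ => c1 * y + c2 * y ^ 2) =O[𝓝 (0:ℝ)] fun y => y := by
  rw [Asymptotics.isBigO_iff]
  refine ⟨|c1| + |c2|, ?_⟩
  have hball : Metric.ball (0:ℝ) 1 ∈ 𝓝 (0:ℝ) := Metric.ball_mem_nhds _ one_pos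
  filter_upwards [hball] with y hy
  rw [mem_ball_zero_iff, Real.norm_eq_abs] at hy
  simp only [Real.norm_eq_abs]
  calc |c1 * y + c2 * y ^ 2| ≤ |c1 * y| + |c2 * y ^ 2| := abs_add_le _ _
    _ = |c1| * |y| + |c2| * (|y| * |y|) := by rw [abs_mul, abs_mul, abs_pow]; ring
    _ ≤ |c1| * |y| + |c2| * (1 * |y|) := by
        have := mul_le_mul_of_nonneg_right hy.le (abs_nonneg y)
        nlinarith [abs_nonneg c2, abs_nonneg y]
    _ = (|c1| + |c2|) * |y| := by ring

lemma poly1_isBigO_one (c0 c1 : ℝ) :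
    (fun y : ℝ => c0 + c1 * y) =O[𝓝 (0:ℝ)] (fun _ => (1:ℝ)) := by
  rw [Asymptotics.isBigO_iff]
  refine ⟨|c0| + |c1|, ?_⟩
  have hball : Metric.ball (0:ℝ) 1 ∈ 𝓝 (0:ℝ) := Metric.ball_mem_nhds _ one_pos
  filter_upwards [hball] with y hy
  rw [mem_ball_zero_iff, Real.norm_eq_abs] at hy
  simp only [Real.norm_eq_abs, norm_one, mul_one]
  calc |c0 + c1 * y| ≤ |c0| + |c1 * y| := abs_add_le _ _
    _ = |c0| + |c1| * |y| := by rw [abs_mul]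
    _ ≤ |c0| + |c1| * 1 := by nlinarith [abs_nonneg c1]
    _ = |c0| + |c1| := by ring

lemma ocl {f f' g : ℝ → ℝ} {l : Filter ℝ} (h : f =o[l] g) (e : ∀ y, f y = f' y) : f' =o[l] g := by
  rwa [show f = f' from funext e] at h

lemma ocr {f g g' : ℝ → ℝ} (h : f =o[𝓝 (0:ℝ)] g) (e : ∀ y, g y = g' y) : f =o[𝓝 (0:ℝ)] g' := by
  rwa [show g = g' from funext e] at h

lemma Ocl {f f' g : ℝ → ℝ} {l : Filter ℝ} (h : f =O[l] g) (e : ∀ y, f y = f' y) : f' =O[l] g := by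
  rwa [show f = f' from funext e] at h

lemma Ocr {f g g' : ℝ → ℝ} (h : f =O[𝓝 (0:ℝ)] g) (e : ∀ y, g y = g' y) : f =O[𝓝 (0:ℝ)] g' := by
  rwa [show g = g' from funext e] at h

set_option maxHeartbeats 4000000 in
theorem inflexion_branch_has_inflexion (f R : ℝ → ℝ → ℝ) (a b0 b1 b2 b3 : ℝ) (ha : 0 < a)
    (hfR : ∀ x y, f x y = x ^ 2 - a ^ 2 * y ^ 2 + b0 * x ^ 3 + b1 * x ^ 2 * y + b2 * x * y ^ 2 + b3 * y ^ 3 + R x y)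
    (hR : ContDiff ℝ (⊤ : ℕ∞) (fun p : ℝ × ℝ => R p.1 p.2))
    (hRo : (fun p : ℝ × ℝ => R p.1 p.2) =o[𝓝 (0 : ℝ × ℝ)] fun p => ‖p‖ ^ 3)
    (φ : ℝ → ℝ) (hφ : ContDiff ℝ (⊤ : ℕ∞) φ) (hφ0 : φ 0 = 0) (hφ1 : deriv φ 0 = a)
    (hbranch : ∀ᶠ y in 𝓝 (0 : ℝ), Infl f (φ y) y = 0) :
    deriv (deriv φ) 0 = 0 := by

  -- ===== setup =====
  set d := deriv (deriv φ) 0 with hddef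
  set G : ℝ × ℝ → ℝ := fun p : ℝ × ℝ => R p.1 p.2 with hGdef
  set G1 := pd (1,0) G with hG1def
  set G2 := pd (0,1) G with hG2def
  set G11 := pd (1,0) G1 with hG11def
  set G21 := pd (0,1) G1 with hG21def
  set G22 := pd (0,1) G2 with hG22def
  have hG1s : ContDiff ℝ (⊤ : ℕ∞) G1 := pd_contDiff hR _
  have hG2s : ContDiff ℝ (⊤ : ℕ∞) G2 := pd_contDiff hR _
  -- ===== partial derivative formulas =====
  have hpx : ∀ x y, px f x y = 2*x + 3*b0*x^2 + 2*b1*x*y + b2*y^2 + G1 (x,y) := by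
    intro x y
    show deriv (fun x' => f x' y) x = _
    rw [show (fun x' => f x' y) = fun x' =>
      x' ^ 2 - a ^ 2 * y ^ 2 + b0 * x' ^ 3 + b1 * x' ^ 2 * y + b2 * x' * y ^ 2 + b3 * y ^ 3 + R x' y
      from funext fun x' => hfR x' y]
    have hRd : HasDerivAt (fun x' => R x' y) (G1 (x,y)) x := hasDerivAt_fst hR x y
    have t1 := (hasDerivAt_pow 2 x).sub_const (a ^ 2 * y ^ 2)
    have t2 := t1.add ((hasDerivAt_pow 3 x).const_mul b0)
    have t3 := t2.add (((hasDerivAt_pow 2 x).const_mul b1).mul_const y)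
    have t4 := t3.add (((hasDerivAt_id x).const_mul b2).mul_const (y ^ 2))
    have t5 := t4.add_const (b3 * y ^ 3)
    have h := t5.add hRd
    exact h.deriv.trans (by push_cast; ring)
  have hpy : ∀ x y, py f x y = -(2*a^2*y) + b1*x^2 + 2*b2*x*y + 3*b3*y^2 + G2 (x,y) := by
    intro x y
    show deriv (fun y' => f x y') y = _
    rw [show (fun y' => f x y') = fun y' =>
      x ^ 2 - a ^ 2 * y' ^ 2 + b0 * x ^ 3 + b1 * x ^ 2 * y' + b2 * x * y' ^ 2 + b3 * y' ^ 3 + R x y'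
      from funext fun y' => hfR x y']
    have hRd : HasDerivAt (fun y' => R x y') (G2 (x,y)) y := hasDerivAt_snd hR x y
    have t1 := (hasDerivAt_const y (x ^ 2)).sub ((hasDerivAt_pow 2 y).const_mul (a ^ 2))
    have t2 := t1.add_const (b0 * x ^ 3)
    have t3 := t2.add ((hasDerivAt_id y).const_mul (b1 * x ^ 2))
    have t4 := t3.add ((hasDerivAt_pow 2 y).const_mul (b2 * x))
    have t5 := t4.add ((hasDerivAt_pow 3 y).const_mul b3)
    have h := t5.add hRd
    exact h.deriv.trans (by push_cast; ring)
  have hpxx : ∀ x y, px (px f) x y = 2 + 6*b0*x + 2*b1*y + G11 (x,y) := by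
    intro x y
    show deriv (fun x' => px f x' y) x = _
    rw [show (fun x' => px f x' y) = fun x' =>
      2*x' + 3*b0*x'^2 + 2*b1*x'*y + b2*y^2 + G1 (x', y)
      from funext fun x' => hpx x' y]
    have hRd : HasDerivAt (fun x' => G1 (x', y)) (G11 (x,y)) x := hasDerivAt_fst hG1s x y
    have t1 := (hasDerivAt_id x).const_mul (2:ℝ)
    have t2 := t1.add ((hasDerivAt_pow 2 x).const_mul (3*b0))
    have t3 := t2.add (((hasDerivAt_id x).const_mul (2*b1)).mul_const y)
    have t4 := t3.add_const (b2*y^2)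
    have h := t4.add hRd
    exact h.deriv.trans (by push_cast; ring)
  have hpyx : ∀ x y, py (px f) x y = 2*b1*x + 2*b2*y + G21 (x,y) := by
    intro x y
    show deriv (fun y' => px f x y') y = _
    rw [show (fun y' => px f x y') = fun y' =>
      2*x + 3*b0*x^2 + 2*b1*x*y' + b2*y'^2 + G1 (x, y')
      from funext fun y' => hpx x y']
    have hRd : HasDerivAt (fun y' => G1 (x, y')) (G21 (x,y)) y := hasDerivAt_snd hG1s x y
    have t1 := hasDerivAt_const y (2*x + 3*b0*x^2)
    have t2 := t1.add ((hasDerivAt_id y).const_mul (2*b1*x))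
    have t3 := t2.add ((hasDerivAt_pow 2 y).const_mul b2)
    have h := t3.add hRd
    exact h.deriv.trans (by push_cast; ring)
  have hpyy : ∀ x y, py (py f) x y = -(2*a^2) + 2*b2*x + 6*b3*y + G22 (x,y) := by
    intro x y
    show deriv (fun y' => py f x y') y = _
    rw [show (fun y' => py f x y') = fun y' =>
      -(2*a^2*y') + b1*x^2 + 2*b2*x*y' + 3*b3*y'^2 + G2 (x, y')
      from funext fun y' => hpy x y']
    have hRd : HasDerivAt (fun y' => G2 (x, y')) (G22 (x,y)) y := hasDerivAt_snd hG2s x y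
    have t1 : HasDerivAt (fun y' : ℝ => -(2*a^2*y')) (-(2*a^2)) y := by
      simpa using ((hasDerivAt_id y).const_mul (2*a^2)).fun_neg
    have t2 := t1.add_const (b1*x^2)
    have t3 := t2.add ((hasDerivAt_id y).const_mul (2*b2*x))
    have t4 := t3.add ((hasDerivAt_pow 2 y).const_mul (3*b3))
    have h := t4.add hRd
    exact h.deriv.trans (by push_cast; ring)
  -- ===== littleO facts for the remainder derivatives =====
  have hne1 : ‖((1:ℝ),(0:ℝ))‖ ≤ 1 := by rw [Prod.norm_def]; simp
  have hne2 : ‖((0:ℝ),(1:ℝ))‖ ≤ 1 := by rw [Prod.norm_def]; simp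
  have oG1 : G1 =o[𝓝 (0 : ℝ × ℝ)] fun p => ‖p‖ ^ 2 := by
    have := key_littleO hR ((1:ℝ),(0:ℝ)) hne1 (k := 3) (by norm_num) (by norm_num) hRo
    simpa using this
  have oG2 : G2 =o[𝓝 (0 : ℝ × ℝ)] fun p => ‖p‖ ^ 2 := by
    have := key_littleO hR ((0:ℝ),(1:ℝ)) hne2 (k := 3) (by norm_num) (by norm_num) hRo
    simpa using this
  have oG11 : G11 =o[𝓝 (0 : ℝ × ℝ)] fun p => ‖p‖ ^ 1 := by
    have := key_littleO hG1s ((1:ℝ),(0:ℝ)) hne1 (k := 2) (by norm_num) (by norm_num) oG1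
    simpa using this
  have oG21 : G21 =o[𝓝 (0 : ℝ × ℝ)] fun p => ‖p‖ ^ 1 := by
    have := key_littleO hG1s ((0:ℝ),(1:ℝ)) hne2 (k := 2) (by norm_num) (by norm_num) oG1
    simpa using this
  have oG22 : G22 =o[𝓝 (0 : ℝ × ℝ)] fun p => ‖p‖ ^ 1 := by
    have := key_littleO hG2s ((0:ℝ),(1:ℝ)) hne2 (k := 2) (by norm_num) (by norm_num) oG2
    simpa using this
  -- ===== branch bound =====
  have hXbound : ∀ᶠ y in 𝓝 (0:ℝ), |φ y| ≤ (|a| + 1) * |y| := by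
    have hd0 : HasDerivAt φ a 0 := by
      have := (hφ.differentiable (by simp) 0).hasDerivAt
      rwa [hφ1] at this
    rw [hasDerivAt_iff_isLittleO] at hd0
    have h2 := hd0.def one_pos
    filter_upwards [h2] with y hy
    simp only [hφ0, sub_zero, smul_eq_mul, Real.norm_eq_abs, one_mul] at hy
    have h3 : |φ y| ≤ |φ y - y * a| + |y * a| := by
      have := abs_add_le (φ y - y * a) (y * a)
      simpa using this
    have h4 : |y * a| = |a| * |y| := by rw [abs_mul]; ring
    calc |φ y| ≤ |φ y - y * a| + |y * a| := h3
      _ ≤ |y| + |a| * |y| := by rw [h4]; exact add_le_add hy le_rfl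
      _ = (|a| + 1) * |y| := by ring
  have hu : (fun y => G1 (φ y, y)) =o[𝓝 (0:ℝ)] fun y => y ^ 2 :=
    comp_branch oG1 (hφ.continuous) hφ0 hXbound
  have hv : (fun y => G2 (φ y, y)) =o[𝓝 (0:ℝ)] fun y => y ^ 2 :=
    comp_branch oG2 (hφ.continuous) hφ0 hXbound
  have hs11 : (fun y => G11 (φ y, y)) =o[𝓝 (0:ℝ)] fun y => y :=
    ocr (comp_branch oG11 (hφ.continuous) hφ0 hXbound) (fun y => pow_one y)
  have hs21 : (fun y => G21 (φ y, y)) =o[𝓝 (0:ℝ)] fun y => y :=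
    ocr (comp_branch oG21 (hφ.continuous) hφ0 hXbound) (fun y => pow_one y)
  have hs22 : (fun y => G22 (φ y, y)) =o[𝓝 (0:ℝ)] fun y => y :=
    ocr (comp_branch oG22 (hφ.continuous) hφ0 hXbound) (fun y => pow_one y)
  -- ===== Taylor expansion of φ =====
  have hφ' : ContDiff ℝ ((⊤ : ℕ∞) : WithTop ℕ∞) (deriv φ) := (contDiff_infty_iff_deriv.mp (hφ.of_le (by simp))).2
  have hdd : HasDerivAt (deriv φ) d 0 :=
    (hφ'.differentiable (by simp : ((⊤ : ℕ∞) : WithTop ℕ∞) ≠ 0) 0).hasDerivAt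
  have hψd : ∀ y, HasDerivAt (fun z => φ z - (a*z + (d/2)*z^2)) (deriv φ y - (a + d*y)) y := by
    intro y
    have h1 := (hφ.differentiable (by simp) y).hasDerivAt
    have h2 : HasDerivAt (fun z : ℝ => a*z + (d/2)*z^2) (a + d*y) y := by
      have t1 := (hasDerivAt_id y).const_mul a
      have t2 := (hasDerivAt_pow 2 y).const_mul (d/2)
      have h3 := t1.add t2
      have e : a * 1 + d / 2 * (((2:ℕ):ℝ) * y ^ (2-1)) = a + d * y := by push_cast; ring
      rw [e] at h3
      exact h3
    exact h1.sub h2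
  have hψ'o : (fun y => deriv φ y - (a + d*y)) =o[𝓝 (0:ℝ)] fun y => y := by
    have h5 := hdd
    rw [hasDerivAt_iff_isLittleO] at h5
    have e1 : (fun y => deriv φ y - deriv φ 0 - (y - 0) • d) = fun y => deriv φ y - (a + d*y) := by
      funext y; rw [hφ1]; simp only [smul_eq_mul, sub_zero]; ring
    have e2 : (fun y : ℝ => y - 0) = fun y : ℝ => y := by funext y; ring
    rw [e1, e2] at h5
    exact h5
  have hψo : (fun y => φ y - (a*y + (d/2)*y^2)) =o[𝓝 (0:ℝ)] fun y => y ^ 2 :=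
    littleO_sq hψd (by simp [hφ0]) hψ'o
  -- ===== basic O facts =====
  have hy2O : (fun y : ℝ => y^2) =O[𝓝 (0:ℝ)] fun y => y := by
    have := (isLittleO_pow_pow (𝕜 := ℝ) (show 1 < 2 by norm_num)).isBigO
    exact Ocr this (fun y => pow_one y)
  have hy2o : (fun y : ℝ => y^2) =o[𝓝 (0:ℝ)] fun y => y :=
    ocr (isLittleO_pow_pow (𝕜 := ℝ) (show 1 < 2 by norm_num)) (fun y => pow_one y)
  have hy3o : (fun y : ℝ => y^3) =o[𝓝 (0:ℝ)] fun y => y ^ 2 :=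
    isLittleO_pow_pow (𝕜 := ℝ) (show 2 < 3 by norm_num)
  have hXay : (fun y => φ y - a*y) =O[𝓝 (0:ℝ)] fun y => y^2 := by
    have h1 := hψo.isBigO
    have h2 : (fun y : ℝ => (d/2)*y^2) =O[𝓝 (0:ℝ)] fun y => y^2 :=
      (isBigO_refl (fun y : ℝ => y^2) _).const_mul_left (d/2)
    exact Ocl (h1.add h2) (fun y => by ring)
  have hXO : φ =O[𝓝 (0:ℝ)] fun y => y := by
    have h1 : (fun y => φ y - a*y) =O[𝓝 (0:ℝ)] fun y => y := hXay.trans hy2O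
    have h2 : (fun y : ℝ => a*y) =O[𝓝 (0:ℝ)] fun y => y :=
      (isBigO_refl (fun y : ℝ => y) _).const_mul_left a
    exact Ocl (h1.add h2) (fun y => by ring)
  have hXpay : (fun y => φ y + a*y) =O[𝓝 (0:ℝ)] fun y => y := by
    have h2 : (fun y : ℝ => a*y) =O[𝓝 (0:ℝ)] fun y => y :=
      (isBigO_refl (fun y : ℝ => y) _).const_mul_left a
    exact hXO.add h2
  -- φ² - a²y² is o(y²)
  have hsq : (fun y => (φ y - a*y) * (φ y + a*y)) =o[𝓝 (0:ℝ)] fun y => y ^ 2 := by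
    have := (hXay.mul hXpay).trans_isLittleO
      (ocl hy3o (fun y : ℝ => by ring : ∀ y : ℝ, y^3 = y^2*y))
    exact this
  have hyXay : (fun y => y * (φ y - a*y)) =o[𝓝 (0:ℝ)] fun y => y ^ 2 := by
    have := ((isBigO_refl (fun y : ℝ => y) (𝓝 (0:ℝ))).mul hXay).trans_isLittleO
      (ocl hy3o (fun y : ℝ => by ring : ∀ y : ℝ, y^3 = y*y^2))
    exact this
  have hXayo : (fun y => φ y - a*y) =o[𝓝 (0:ℝ)] fun y => y := hXay.trans_isLittleO hy2o
  -- ===== littleO of branch functions minus model polynomials =====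
  have oA1 : (fun y => (2*(φ y) + 3*b0*(φ y)^2 + 2*b1*(φ y)*y + b2*y^2 + G1 (φ y, y)) - (2*a*y + (d + 3*b0*a^2 + 2*b1*a + b2)*y^2)) =o[𝓝 (0:ℝ)] fun y => y ^ 2 := by
    have T1 := hψo.const_mul_left 2
    have T2 := hsq.const_mul_left (3*b0)
    have T3 := hyXay.const_mul_left (2*b1)
    have S := ((T1.add T2).add T3).add hu
    exact ocl S (fun y => by ring)
  have oA2 : (fun y => (-(2*a^2*y) + b1*(φ y)^2 + 2*b2*(φ y)*y + 3*b3*y^2 + G2 (φ y, y)) - ((-(2*a^2))*y + (b1*a^2 + 2*b2*a + 3*b3)*y^2)) =o[𝓝 (0:ℝ)] fun y => y ^ 2 := by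
    have T2 := hsq.const_mul_left b1
    have T3 := hyXay.const_mul_left (2*b2)
    have S := (T2.add T3).add hv
    exact ocl S (fun y => by ring)
  have oH11 : (fun y => (2 + 6*b0*(φ y) + 2*b1*y + G11 (φ y, y)) - (2 + (6*b0*a + 2*b1)*y)) =o[𝓝 (0:ℝ)] fun y => y := by
    have T1 := hXayo.const_mul_left (6*b0)
    exact ocl (T1.add hs11) (fun y => by ring)
  have oH12 : (fun y => (2*b1*(φ y) + 2*b2*y + G21 (φ y, y)) - ((2*b1*a + 2*b2)*y)) =o[𝓝 (0:ℝ)] fun y => y := by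
    have T1 := hXayo.const_mul_left (2*b1)
    exact ocl (T1.add hs21) (fun y => by ring)
  have oH22 : (fun y => (-(2*a^2) + 2*b2*(φ y) + 6*b3*y + G22 (φ y, y)) - (-(2*a^2) + (2*b2*a + 6*b3)*y)) =o[𝓝 (0:ℝ)] fun y => y := by
    have T1 := hXayo.const_mul_left (2*b2)
    exact ocl (T1.add hs22) (fun y => by ring)
  -- ===== O facts for branch functions =====
  have m1O : (fun y : ℝ => (2*a*y + (d + 3*b0*a^2 + 2*b1*a + b2)*y^2)) =O[𝓝 (0:ℝ)] fun y => y := by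
    have := poly2_isBigO (2*a) (d + 3*b0*a^2 + 2*b1*a + b2)
    exact Ocl this (fun y => by ring)
  have m2O : (fun y : ℝ => ((-(2*a^2))*y + (b1*a^2 + 2*b2*a + 3*b3)*y^2)) =O[𝓝 (0:ℝ)] fun y => y := by
    have := poly2_isBigO (-(2*a^2)) (b1*a^2 + 2*b2*a + 3*b3)
    exact Ocl this (fun y => by ring)
  have q11O : (fun y : ℝ => (2 + (6*b0*a + 2*b1)*y)) =O[𝓝 (0:ℝ)] fun _ => (1:ℝ) := by
    have := poly1_isBigO_one 2 (6*b0*a + 2*b1)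
    exact Ocl this (fun y => by ring)
  have q12O : (fun y : ℝ => ((2*b1*a + 2*b2)*y)) =O[𝓝 (0:ℝ)] fun _ => (1:ℝ) := by
    have := poly1_isBigO_one 0 (2*b1*a + 2*b2)
    exact Ocl this (fun y => by ring)
  have q22O : (fun y : ℝ => (-(2*a^2) + (2*b2*a + 6*b3)*y)) =O[𝓝 (0:ℝ)] fun _ => (1:ℝ) := by
    have := poly1_isBigO_one (-(2*a^2)) (2*b2*a + 6*b3)
    exact Ocl this (fun y => by ring)
  have hA1O : (fun y => (2*(φ y) + 3*b0*(φ y)^2 + 2*b1*(φ y)*y + b2*y^2 + G1 (φ y, y))) =O[𝓝 (0:ℝ)] fun y => y := by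
    have := (oA1.isBigO.trans hy2O).add m1O
    exact Ocl this (fun y => by ring)
  have hA2O : (fun y => (-(2*a^2*y) + b1*(φ y)^2 + 2*b2*(φ y)*y + 3*b3*y^2 + G2 (φ y, y))) =O[𝓝 (0:ℝ)] fun y => y := by
    have := (oA2.isBigO.trans hy2O).add m2O
    exact Ocl this (fun y => by ring)
  have hA2pm : (fun y => (-(2*a^2*y) + b1*(φ y)^2 + 2*b2*(φ y)*y + 3*b3*y^2 + G2 (φ y, y)) + ((-(2*a^2))*y + (b1*a^2 + 2*b2*a + 3*b3)*y^2)) =O[𝓝 (0:ℝ)] fun y => y := hA2O.add m2O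
  have hA1pm : (fun y => (2*(φ y) + 3*b0*(φ y)^2 + 2*b1*(φ y)*y + b2*y^2 + G1 (φ y, y)) + (2*a*y + (d + 3*b0*a^2 + 2*b1*a + b2)*y^2)) =O[𝓝 (0:ℝ)] fun y => y := hA1O.add m1O
  -- ===== the three product estimates =====
  have t1 : (fun y => (2 + 6*b0*(φ y) + 2*b1*y + G11 (φ y, y)) * (-(2*a^2*y) + b1*(φ y)^2 + 2*b2*(φ y)*y + 3*b3*y^2 + G2 (φ y, y))^2 - (2 + (6*b0*a + 2*b1)*y) * ((-(2*a^2))*y + (b1*a^2 + 2*b2*a + 3*b3)*y^2)^2) =o[𝓝 (0:ℝ)] fun y => y ^ 3 := by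
    have pa : (fun y => ((2 + 6*b0*(φ y) + 2*b1*y + G11 (φ y, y)) - (2 + (6*b0*a + 2*b1)*y)) * ((-(2*a^2*y) + b1*(φ y)^2 + 2*b2*(φ y)*y + 3*b3*y^2 + G2 (φ y, y)) * (-(2*a^2*y) + b1*(φ y)^2 + 2*b2*(φ y)*y + 3*b3*y^2 + G2 (φ y, y)))) =o[𝓝 (0:ℝ)] fun y => y ^ 3 :=
      ocr (oH11.mul_isBigO (hA2O.mul hA2O)) (fun y => by ring)
    have pb : (fun y => (2 + (6*b0*a + 2*b1)*y) * (((-(2*a^2*y) + b1*(φ y)^2 + 2*b2*(φ y)*y + 3*b3*y^2 + G2 (φ y, y)) - ((-(2*a^2))*y + (b1*a^2 + 2*b2*a + 3*b3)*y^2)) * ((-(2*a^2*y) + b1*(φ y)^2 + 2*b2*(φ y)*y + 3*b3*y^2 + G2 (φ y, y)) + ((-(2*a^2))*y + (b1*a^2 + 2*b2*a + 3*b3)*y^2)))) =o[𝓝 (0:ℝ)] fun y => y ^ 3 :=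
      ocr (q11O.mul_isLittleO (oA2.mul_isBigO hA2pm)) (fun y => by ring)
    exact ocl (pa.add pb) (fun y => by ring)
  have t2 : (fun y => (2*b1*(φ y) + 2*b2*y + G21 (φ y, y)) * (2*(φ y) + 3*b0*(φ y)^2 + 2*b1*(φ y)*y + b2*y^2 + G1 (φ y, y)) * (-(2*a^2*y) + b1*(φ y)^2 + 2*b2*(φ y)*y + 3*b3*y^2 + G2 (φ y, y)) - ((2*b1*a + 2*b2)*y) * (2*a*y + (d + 3*b0*a^2 + 2*b1*a + b2)*y^2) * ((-(2*a^2))*y + (b1*a^2 + 2*b2*a + 3*b3)*y^2)) =o[𝓝 (0:ℝ)] fun y => y ^ 3 := by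
    have pc : (fun y => ((2*b1*(φ y) + 2*b2*y + G21 (φ y, y)) - ((2*b1*a + 2*b2)*y)) * ((2*(φ y) + 3*b0*(φ y)^2 + 2*b1*(φ y)*y + b2*y^2 + G1 (φ y, y)) * (-(2*a^2*y) + b1*(φ y)^2 + 2*b2*(φ y)*y + 3*b3*y^2 + G2 (φ y, y)))) =o[𝓝 (0:ℝ)] fun y => y ^ 3 :=
      ocr (oH12.mul_isBigO (hA1O.mul hA2O)) (fun y => by ring)
    have pd1 : (fun y => ((2*(φ y) + 3*b0*(φ y)^2 + 2*b1*(φ y)*y + b2*y^2 + G1 (φ y, y)) - (2*a*y + (d + 3*b0*a^2 + 2*b1*a + b2)*y^2)) * (-(2*a^2*y) + b1*(φ y)^2 + 2*b2*(φ y)*y + 3*b3*y^2 + G2 (φ y, y))) =o[𝓝 (0:ℝ)] fun y => y ^ 3 :=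
      ocr (oA1.mul_isBigO hA2O) (fun y => by ring)
    have pd2 : (fun y => (2*a*y + (d + 3*b0*a^2 + 2*b1*a + b2)*y^2) * ((-(2*a^2*y) + b1*(φ y)^2 + 2*b2*(φ y)*y + 3*b3*y^2 + G2 (φ y, y)) - ((-(2*a^2))*y + (b1*a^2 + 2*b2*a + 3*b3)*y^2))) =o[𝓝 (0:ℝ)] fun y => y ^ 3 :=
      ocr (m1O.mul_isLittleO oA2) (fun y => by ring)
    have pd : (fun y => ((2*b1*a + 2*b2)*y) * (((2*(φ y) + 3*b0*(φ y)^2 + 2*b1*(φ y)*y + b2*y^2 + G1 (φ y, y)) - (2*a*y + (d + 3*b0*a^2 + 2*b1*a + b2)*y^2)) * (-(2*a^2*y) + b1*(φ y)^2 + 2*b2*(φ y)*y + 3*b3*y^2 + G2 (φ y, y)) + (2*a*y + (d + 3*b0*a^2 + 2*b1*a + b2)*y^2) * ((-(2*a^2*y) + b1*(φ y)^2 + 2*b2*(φ y)*y + 3*b3*y^2 + G2 (φ y, y)) - ((-(2*a^2))*y + (b1*a^2 + 2*b2*a + 3*b3)*y^2)))) =o[𝓝 (0:ℝ)]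
        fun y => y ^ 3 :=
      ocr (q12O.mul_isLittleO (pd1.add pd2)) (fun y => by ring)
    exact ocl (pc.add pd) (fun y => by ring)
  have t3 : (fun y => (-(2*a^2) + 2*b2*(φ y) + 6*b3*y + G22 (φ y, y)) * (2*(φ y) + 3*b0*(φ y)^2 + 2*b1*(φ y)*y + b2*y^2 + G1 (φ y, y))^2 - (-(2*a^2) + (2*b2*a + 6*b3)*y) * (2*a*y + (d + 3*b0*a^2 + 2*b1*a + b2)*y^2)^2) =o[𝓝 (0:ℝ)] fun y => y ^ 3 := by
    have pa : (fun y => ((-(2*a^2) + 2*b2*(φ y) + 6*b3*y + G22 (φ y, y)) - (-(2*a^2) + (2*b2*a + 6*b3)*y)) * ((2*(φ y) + 3*b0*(φ y)^2 + 2*b1*(φ y)*y + b2*y^2 + G1 (φ y, y)) * (2*(φ y) + 3*b0*(φ y)^2 + 2*b1*(φ y)*y + b2*y^2 + G1 (φ y, y)))) =o[𝓝 (0:ℝ)] fun y => y ^ 3 :=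
      ocr (oH22.mul_isBigO (hA1O.mul hA1O)) (fun y => by ring)
    have pb : (fun y => (-(2*a^2) + (2*b2*a + 6*b3)*y) * (((2*(φ y) + 3*b0*(φ y)^2 + 2*b1*(φ y)*y + b2*y^2 + G1 (φ y, y)) - (2*a*y + (d + 3*b0*a^2 + 2*b1*a + b2)*y^2)) * ((2*(φ y) + 3*b0*(φ y)^2 + 2*b1*(φ y)*y + b2*y^2 + G1 (φ y, y)) + (2*a*y + (d + 3*b0*a^2 + 2*b1*a + b2)*y^2)))) =o[𝓝 (0:ℝ)] fun y => y ^ 3 :=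
      ocr (q22O.mul_isLittleO (oA1.mul_isBigO hA1pm)) (fun y => by ring)
    exact ocl (pa.add pb) (fun y => by ring)
  -- ===== the polynomial part =====
  have tQ : (fun y => (2 + (6*b0*a + 2*b1)*y) * ((-(2*a^2))*y + (b1*a^2 + 2*b2*a + 3*b3)*y^2)^2 - 2 * (((2*b1*a + 2*b2)*y) * (2*a*y + (d + 3*b0*a^2 + 2*b1*a + b2)*y^2) * ((-(2*a^2))*y + (b1*a^2 + 2*b2*a + 3*b3)*y^2)) + (-(2*a^2) + (2*b2*a + 6*b3)*y) * (2*a*y + (d + 3*b0*a^2 + 2*b1*a + b2)*y^2)^2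
      + 8*a^3*d*y^3) =o[𝓝 (0:ℝ)] fun y => y ^ 3 := by
    have hPt : Filter.Tendsto (fun y : ℝ => y * ((6)*b3*d^2*y + (18)*b3^2 + (-6)*b2^2*b3*y + (18)*b1*b3^2*y + (24)*a*b3*d + (2)*a*b2*d^2*y + (24)*a*b2*b3 + (-4)*a*b2^2*d*y + (-6)*a*b2^3*y + (12)*a*b1*b3*d*y + (12)*a*b1*b2*b3*y + (54)*a*b0*b3^2*y + (-2)*a^2*d^2 + (12)*a^2*b2*d + (6)*a^2*b2^2 + (12)*a^2*b1*b3 + (-4)*a^2*b1*b2*d*y + (-12)*a^2*b1*b2^2*y + (12)*a^2*b1^2*b3*y + (36)*a^2*b0*b3*d*y + (72)*a^2*b0*b2*b3*y + (-4)*a^3*b1^2*d*y + (-12)*a^3*b1^2*b2*y + (12)*a^3*b0*b2*d*y + (12)*a^3*b0*b2^2*y + (72)*a^3*b0*b1*b3*y + (-6)*a^4*b1^3*y + (-6)*a^4*b1^2 + (-12)*a^4*b0*d + (-12)*a^4*b0*b2 + (12)*a^4*b0*b1*b2*y + (54)*a^4*b0^2*b3*y + (-24)*a^5*b0*b1 +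 (-6)*a^5*b0*b1^2*y + (18)*a^5*b0^2*b2*y + (-18)*a^6*b0^2)) (𝓝 0) (𝓝 0) := by
      have hc : Continuous (fun y : ℝ => y * ((6)*b3*d^2*y + (18)*b3^2 + (-6)*b2^2*b3*y + (18)*b1*b3^2*y + (24)*a*b3*d + (2)*a*b2*d^2*y + (24)*a*b2*b3 + (-4)*a*b2^2*d*y + (-6)*a*b2^3*y + (12)*a*b1*b3*d*y + (12)*a*b1*b2*b3*y + (54)*a*b0*b3^2*y + (-2)*a^2*d^2 + (12)*a^2*b2*d + (6)*a^2*b2^2 + (12)*a^2*b1*b3 + (-4)*a^2*b1*b2*d*y + (-12)*a^2*b1*b2^2*y + (12)*a^2*b1^2*b3*y + (36)*a^2*b0*b3*d*y + (72)*a^2*b0*b2*b3*y + (-4)*a^3*b1^2*d*y + (-12)*a^3*b1^2*b2*y + (12)*a^3*b0*b2*d*y + (12)*a^3*b0*b2^2*y + (72)*a^3*b0*b1*b3*y + (-6)*a^4*b1^3*y + (-6)*a^4*b1^2 + (-12)*a^4*b0*d + (-12)*a^4*b0*b2 + (12)*a^4*b0*b1*b2*y + (54)*a^4*b0^2*b3*y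 + (-24)*a^5*b0*b1 + (-6)*a^5*b0*b1^2*y + (18)*a^5*b0^2*b2*y + (-18)*a^6*b0^2)) := by fun_prop
      exact hc.tendsto' 0 0 (zero_mul _)
    have hP1 : (fun y : ℝ => y * ((6)*b3*d^2*y + (18)*b3^2 + (-6)*b2^2*b3*y + (18)*b1*b3^2*y + (24)*a*b3*d + (2)*a*b2*d^2*y + (24)*a*b2*b3 + (-4)*a*b2^2*d*y + (-6)*a*b2^3*y + (12)*a*b1*b3*d*y + (12)*a*b1*b2*b3*y + (54)*a*b0*b3^2*y + (-2)*a^2*d^2 + (12)*a^2*b2*d + (6)*a^2*b2^2 + (12)*a^2*b1*b3 + (-4)*a^2*b1*b2*d*y + (-12)*a^2*b1*b2^2*y + (12)*a^2*b1^2*b3*y + (36)*a^2*b0*b3*d*y + (72)*a^2*b0*b2*b3*y + (-4)*a^3*b1^2*d*y + (-12)*a^3*b1^2*b2*y + (12)*a^3*b0*b2*d*y + (12)*a^3*b0*b2^2*y + (72)*a^3*b0*b1*b3*y + (-6)*a^4*b1^3*y + (-6)*a^4*b1^2 + (-12)*a^4*b0*d + (-12)*a^4*b0*b2 + (12)*a^4*b0*b1*b2*y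 + (54)*a^4*b0^2*b3*y + (-24)*a^5*b0*b1 + (-6)*a^5*b0*b1^2*y + (18)*a^5*b0^2*b2*y + (-18)*a^6*b0^2)) =o[𝓝 (0:ℝ)] (fun _ => (1:ℝ)) :=
      (isLittleO_one_iff ℝ).mpr hPt
    have h2 := (isBigO_refl (fun y : ℝ => y ^ 3) (𝓝 (0:ℝ))).mul_isLittleO hP1
    have h3 := ocr h2 (fun y : ℝ => by ring : ∀ y : ℝ, y^3*1 = y^3)
    exact ocl h3 (fun y => by ring)
  -- ===== assembly =====
  have hInfl : ∀ y, Infl f (φ y) y = (2 + 6*b0*(φ y) + 2*b1*y + G11 (φ y, y)) * (-(2*a^2*y) + b1*(φ y)^2 + 2*b2*(φ y)*y + 3*b3*y^2 + G2 (φ y, y))^2 - 2 * (2*b1*(φ y) + 2*b2*y + G21 (φ y, y)) * (2*(φ y) + 3*b0*(φ y)^2 + 2*b1*(φ y)*y + b2*y^2 + G1 (φ y, y)) * (-(2*a^2*y) + b1*(φ y)^2 + 2*b2*(φ y)*y + 3*b3*y^2 + G2 (φ y, y))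
      + (-(2*a^2) + 2*b2*(φ y) + 6*b3*y + G22 (φ y, y)) * (2*(φ y) + 3*b0*(φ y)^2 + 2*b1*(φ y)*y + b2*y^2 + G1 (φ y, y))^2 := by
    intro y
    simp only [Infl]
    rw [hpxx (φ y) y, hpyx (φ y) y, hpyy (φ y) y, hpx (φ y) y, hpy (φ y) y]
  have S := ((t1.sub (t2.const_mul_left 2)).add t3).add tQ
  have htotal : (fun y => Infl f (φ y) y + 8*a^3*d*y^3) =o[𝓝 (0:ℝ)] fun y => y ^ 3 := by
    refine ocl S (fun y => ?_)
    rw [hInfl y]; ring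
  have hEq : (fun y => Infl f (φ y) y + 8*a^3*d*y^3) =ᶠ[𝓝 (0:ℝ)]
      (fun y => 8*a^3*d*y^3) := by
    filter_upwards [hbranch] with y h
    rw [h]; ring
  have hfin : (fun y : ℝ => 8*a^3*d*y^3) =o[𝓝 (0:ℝ)] fun y => y ^ 3 :=
    htotal.congr' hEq (Filter.EventuallyEq.refl _ _)
  have hC : 8*a^3*d = 0 := kill_cube hfin
  have ha3 : (8:ℝ)*a^3 ≠ 0 := by positivity
  exact (mul_eq_zero.mp hC).resolve_left ha3
end

section
/- Let f(x,y) = x² − a²y² + cubic terms + h.o.t. with a > 0, and let VH₁ be the branch of the vertex set V_f = 0 tangent to the principal direction x = 0, parametrized as (x(y), y) with x(y) = O(y²). Then the squared curvature κ² of the level curves of f along VH₁ satisfies: numerator of κ² is 64a⁸y⁴ + O(y⁵) and denominator is 64a¹²y⁶ + O(y⁷), so κ² → ∞ as y → 0; the limiting curvature at vertices along VH₁ is infinite. -/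
open Topology Asymptotics Filter

lemma aux_hasDerivAt_congr {f : ℝ → ℝ} {d d' x : ℝ} (h : HasDerivAt f d x) (hd : d = d') :
    HasDerivAt f d' x := hd ▸ h

lemma aux_onedim_nonpos (g dg : ℝ → ℝ) (hg : ∀ t, HasDerivAt g (dg t) t)
    (h0 : dg 0 = 0) {c : ℝ} (hdg : HasDerivAt dg c 0)
    (ho : g =o[𝓝 (0:ℝ)] fun t => t ^ 2) : c ≤ 0 := by
  by_contra hc
  push_neg at hc
  have hg0 : g 0 = 0 := by
    have h := (ho.def one_pos).self_of_nhds
    simpa using h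
  -- linear lower bound on dg
  have hlin : ∀ᶠ t in 𝓝 (0:ℝ), ‖dg t - t • c‖ ≤ c/2 * ‖t‖ := by
    have h := (hasDerivAt_iff_isLittleO.mp hdg)
    simp only [h0, sub_zero] at h
    exact h.def (by positivity)
  obtain ⟨δ1, hδ1, H1⟩ := Metric.eventually_nhds_iff.mp hlin
  obtain ⟨δ2, hδ2, H2⟩ := Metric.eventually_nhds_iff.mp (ho.def (show (0:ℝ) < c/16 by positivity))
  set δ : ℝ := min δ1 δ2 / 2 with hδdef
  have hδpos : 0 < δ := by positivity
  have hδlt1 : δ < δ1 := by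
    have := min_le_left δ1 δ2; simp only [hδdef]; linarith
  have hδlt2 : δ < δ2 := by
    have := min_le_right δ1 δ2; simp only [hδdef]; linarith
  have key : ∀ t : ℝ, 0 ≤ t → t ≤ δ → c/2 * t ≤ dg t := by
    intro t ht ht'
    have hd : dist t 0 < δ1 := by
      rw [Real.dist_eq, sub_zero, abs_of_nonneg ht]; linarith
    have h := H1 hd
    rw [Real.norm_eq_abs, Real.norm_eq_abs, abs_of_nonneg ht] at h
    have h2 : |dg t - t * c| ≤ c/2 * t := by simpa [smul_eq_mul] using h
    have := abs_le.mp h2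
    nlinarith [this.1]
  -- monotone on [0, δ]
  have hmono : MonotoneOn g (Set.Icc 0 δ) := by
    apply monotoneOn_of_deriv_nonneg (convex_Icc _ _)
      (fun x _ => (hg x).continuousAt.continuousWithinAt)
      (fun x _ => ((hg x).differentiableAt).differentiableWithinAt)
    intro x hx
    rw [interior_Icc] at hx
    rw [(hg x).deriv]
    have := key x hx.1.le (le_of_lt hx.2)
    nlinarith [hx.1]
  -- MVT on [δ/2, δ]
  obtain ⟨ξ, hξ, hslope⟩ := exists_hasDerivAt_eq_slope g dg (show δ/2 < δ by linarith)
    (fun x _ => (hg x).continuousAt.continuousWithinAt) (fun x _ => hg x)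
  have hξ1 : δ/2 < ξ := hξ.1
  have hξ2 : ξ < δ := hξ.2
  have hgap : g δ - g (δ/2) = dg ξ * (δ - δ/2) := by
    rw [hslope, div_mul_cancel₀ _ (show δ - δ/2 ≠ 0 by intro h; nlinarith)]
  have hdgξ : c/2 * (δ/2) ≤ dg ξ := by
    have := key ξ (by linarith) (by linarith)
    nlinarith
  have hmid : 0 ≤ g (δ/2) := by
    have := hmono (show (0:ℝ) ∈ Set.Icc 0 δ from Set.mem_Icc.mpr ⟨le_refl 0, hδpos.le⟩)
      (show δ/2 ∈ Set.Icc 0 δ from Set.mem_Icc.mpr ⟨by linarith, by linarith⟩) (by linarith)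
    rwa [hg0] at this
  have hlow : c/8 * δ^2 ≤ g δ := by
    have h8 : (c/2 * (δ/2)) * (δ/2) ≤ dg ξ * (δ/2) :=
      mul_le_mul_of_nonneg_right hdgξ (by linarith)
    nlinarith
  have hupp : |g δ| ≤ c/16 * |δ^2| := by
    have hd : dist δ 0 < δ2 := by rw [Real.dist_eq, sub_zero, abs_of_nonneg hδpos.le]; linarith
    have := H2 hd
    simpa [Real.norm_eq_abs] using this
  rw [abs_of_nonneg (by positivity : (0:ℝ) ≤ δ^2)] at hupp
  have h9 := (abs_le.mp hupp).2
  have hpos : 0 < c * δ^2 := by positivity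
  nlinarith

lemma aux_onedim_zero (g dg : ℝ → ℝ) (hg : ∀ t, HasDerivAt g (dg t) t)
    (h0 : dg 0 = 0) {c : ℝ} (hdg : HasDerivAt dg c 0)
    (ho : g =o[𝓝 (0:ℝ)] fun t => t ^ 2) : c = 0 := by
  have h1 : c ≤ 0 := aux_onedim_nonpos g dg hg h0 hdg ho
  have h2 : -c ≤ 0 := aux_onedim_nonpos (fun t => -g t) (fun t => -dg t)
    (fun t => (hg t).neg) (by simp [h0]) hdg.neg ho.neg_left
  linarith

lemma aux_fderiv1_zero (U : ℝ × ℝ → ℝ) (hU : ContDiff ℝ (⊤ : ℕ∞) U)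
    (hUo : U =o[𝓝 (0 : ℝ × ℝ)] fun p => ‖p‖ ^ 3) :
    fderiv ℝ U 0 = 0 := by
  have hU0 : U 0 = 0 := by simpa using (hUo.def one_pos).self_of_nhds
  have hcube : (fun p : ℝ × ℝ => ‖p‖ ^ 3) =O[𝓝 (0 : ℝ × ℝ)] fun p => p := by
    rw [isBigO_iff]
    refine ⟨1, ?_⟩
    filter_upwards [Metric.ball_mem_nhds (0 : ℝ × ℝ) one_pos] with p hp
    have hp1 : ‖p‖ ≤ 1 := by
      have := mem_ball_iff_norm.mp hp
      simpa using this.le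
    have h0 : (0:ℝ) ≤ ‖p‖ := norm_nonneg p
    have : ‖‖p‖ ^ 3‖ = ‖p‖ ^ 3 := by
      rw [Real.norm_eq_abs, abs_of_nonneg (by positivity)]
    rw [this]
    nlinarith [mul_nonneg (mul_nonneg h0 (by linarith : (0:ℝ) ≤ 1 - ‖p‖)) (by linarith : (0:ℝ) ≤ 1 + ‖p‖)]
  have h1 : HasFDerivAt U (0 : ℝ × ℝ →L[ℝ] ℝ) 0 := by
    rw [hasFDerivAt_iff_isLittleO_nhds_zero]
    simpa [hU0] using hUo.trans_isBigO hcube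
  exact h1.fderiv

lemma aux_fderiv2_zero (U : ℝ × ℝ → ℝ) (hU : ContDiff ℝ (⊤ : ℕ∞) U)
    (hUo : U =o[𝓝 (0 : ℝ × ℝ)] fun p => ‖p‖ ^ 3) :
    fderiv ℝ (fderiv ℝ U) 0 = 0 := by
  have hUdiff : Differentiable ℝ U := hU.differentiable (by simp)
  have hAc : ContDiff ℝ (⊤ : ℕ∞) (fderiv ℝ U) := hU.fderiv_right (by simp)
  have hA0 : fderiv ℝ U 0 = 0 := aux_fderiv1_zero U hU hUo
  have hB : HasFDerivAt (fderiv ℝ U) (fderiv ℝ (fderiv ℝ U) 0) 0 :=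
    (hAc.differentiable (by simp) 0).hasFDerivAt
  set B := fderiv ℝ (fderiv ℝ U) 0 with hBdef
  have quad : ∀ v : ℝ × ℝ, B v v = 0 := by
    intro v
    have hline : ∀ t : ℝ, HasDerivAt (fun s : ℝ => s • v) v t := fun t => by
      simpa using (hasDerivAt_id t).smul_const v
    have hg : ∀ t : ℝ, HasDerivAt (fun s => U (s • v)) (fderiv ℝ U (t • v) v) t :=
      fun t => ((hUdiff (t • v)).hasFDerivAt).comp_hasDerivAt t (hline t)
    have h0 : fderiv ℝ U ((0:ℝ) • v) v = 0 := by
      rw [zero_smul, hA0]; rfl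
    have h2 : HasFDerivAt (fun p => fderiv ℝ U p v)
        ((ContinuousLinearMap.apply ℝ ℝ v).comp B) ((0:ℝ) • v) := by
      rw [zero_smul]
      exact ((ContinuousLinearMap.apply ℝ ℝ v).hasFDerivAt).comp 0 hB
    have hdg : HasDerivAt (fun t : ℝ => fderiv ℝ U (t • v) v) (B v v) 0 := by
      have h3 := h2.comp_hasDerivAt 0 (hline 0)
      simpa [Function.comp_def] using h3
    have hcomp : Tendsto (fun t : ℝ => t • v) (𝓝 0) (𝓝 (0 : ℝ × ℝ)) := by
      have := ((continuous_id.smul (continuous_const : Continuous fun _ : ℝ => v))).tendsto 0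
      simpa [Pi.smul_def'] using this
    have h3 : (fun t : ℝ => U (t • v)) =o[𝓝 (0:ℝ)] fun t => ‖t • v‖ ^ 3 :=
      hUo.comp_tendsto hcomp
    have h4 : (fun t : ℝ => ‖t • v‖ ^ 3) =O[𝓝 (0:ℝ)] fun t => t ^ 2 := by
      rw [isBigO_iff]
      refine ⟨‖v‖ ^ 3, ?_⟩
      filter_upwards [Metric.ball_mem_nhds (0 : ℝ) one_pos] with t ht
      have ht1 : |t| ≤ 1 := by
        have := mem_ball_iff_norm.mp ht
        simpa [Real.norm_eq_abs] using this.le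
      have habs : (0:ℝ) ≤ |t| := abs_nonneg t
      rw [norm_smul]
      rw [Real.norm_eq_abs, Real.norm_eq_abs t, abs_of_nonneg (by positivity : (0:ℝ) ≤ (|t| * ‖v‖)^3)]
      have : (|t| * ‖v‖) ^ 3 = |t|^3 * ‖v‖^3 := by ring
      rw [this]
      have h5 : |t|^3 ≤ |t|^2 := by nlinarith
      have h6 : ‖t^2‖ = |t|^2 := by rw [Real.norm_eq_abs, abs_pow]
      rw [h6]
      nlinarith [pow_nonneg (norm_nonneg v) 3, h5]
    have ho : (fun t : ℝ => U (t • v)) =o[𝓝 (0:ℝ)] fun t => t ^ 2 := h3.trans_isBigO h4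
    exact aux_onedim_zero _ _ hg (by simpa using h0) hdg ho
  have hsymm := second_derivative_symmetric (fun y => (hUdiff y).hasFDerivAt) hB
  refine ContinuousLinearMap.ext fun v => ContinuousLinearMap.ext fun w => ?_
  have h4 := quad (v + w)
  rw [map_add] at h4
  simp only [ContinuousLinearMap.add_apply, map_add] at h4
  have hvv := quad v
  have hww := quad w
  have hsym := hsymm v w
  simp only [ContinuousLinearMap.zero_apply]
  linarith

lemma aux_px (f R : ℝ → ℝ → ℝ) (a b0 b1 b2 b3 : ℝ)
    (hfR : ∀ x y, f x y = x ^ 2 - a ^ 2 * y ^ 2 + b0 * x ^ 3 + b1 * x ^ 2 * y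
      + b2 * x * y ^ 2 + b3 * y ^ 3 + R x y)
    (hR : ContDiff ℝ (⊤ : ℕ∞) (fun p : ℝ × ℝ => R p.1 p.2))
    (x y : ℝ) : px f x y = 2*x + 3*b0*x^2 + 2*b1*x*y + b2*y^2
      + fderiv ℝ (fun p : ℝ × ℝ => R p.1 p.2) (x, y) (1, 0) := by
  have hline : HasDerivAt (fun x' : ℝ => ((x' : ℝ), y)) ((1:ℝ), (0:ℝ)) x :=
    (hasDerivAt_id x).prodMk (hasDerivAt_const x y)
  have hU1 : HasDerivAt (fun x' : ℝ => (fun p : ℝ × ℝ => R p.1 p.2) (x', y))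
      (fderiv ℝ (fun p : ℝ × ℝ => R p.1 p.2) (x, y) ((1:ℝ), (0:ℝ))) x :=
    (((hR.differentiable (by simp)) (x, y)).hasFDerivAt).comp_hasDerivAt (f := fun x' : ℝ => ((x' : ℝ), y)) x hline
  have Hp := (((((hasDerivAt_pow 2 x).sub_const (a^2*y^2)).add
      (HasDerivAt.const_mul b0 (hasDerivAt_pow 3 x))).add
      ((HasDerivAt.const_mul b1 (hasDerivAt_pow 2 x)).mul_const y)).add
      ((HasDerivAt.const_mul b2 (hasDerivAt_id x)).mul_const (y^2))).add_const (b3*y^3)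
  have H : HasDerivAt (fun x' => f x' y) (2*x + 3*b0*x^2 + 2*b1*x*y + b2*y^2
      + fderiv ℝ (fun p : ℝ × ℝ => R p.1 p.2) (x, y) (1, 0)) x := by
    simp only [hfR]
    refine aux_hasDerivAt_congr (Hp.add hU1) ?_
    push_cast
    ring
  exact H.deriv

lemma aux_py (f R : ℝ → ℝ → ℝ) (a b0 b1 b2 b3 : ℝ)
    (hfR : ∀ x y, f x y = x ^ 2 - a ^ 2 * y ^ 2 + b0 * x ^ 3 + b1 * x ^ 2 * y
      + b2 * x * y ^ 2 + b3 * y ^ 3 + R x y)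
    (hR : ContDiff ℝ (⊤ : ℕ∞) (fun p : ℝ × ℝ => R p.1 p.2))
    (x y : ℝ) : py f x y = -(2*a^2*y) + b1*x^2 + 2*b2*x*y + 3*b3*y^2
      + fderiv ℝ (fun p : ℝ × ℝ => R p.1 p.2) (x, y) (0, 1) := by
  have hline : HasDerivAt (fun y' : ℝ => ((x : ℝ), (y' : ℝ))) ((0:ℝ), (1:ℝ)) y :=
    (hasDerivAt_const y x).prodMk (hasDerivAt_id y)
  have hU1 : HasDerivAt (fun y' : ℝ => (fun p : ℝ × ℝ => R p.1 p.2) (x, y'))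
      (fderiv ℝ (fun p : ℝ × ℝ => R p.1 p.2) (x, y) ((0:ℝ), (1:ℝ))) y :=
    (((hR.differentiable (by simp)) (x, y)).hasFDerivAt).comp_hasDerivAt y hline
  have Hp := ((((((hasDerivAt_const y (x^2)).sub
      (HasDerivAt.const_mul (a^2) (hasDerivAt_pow 2 y))).add_const (b0*x^3)).add
      (HasDerivAt.const_mul (b1*x^2) (hasDerivAt_id y))).add
      (HasDerivAt.const_mul (b2*x) (hasDerivAt_pow 2 y))).add
      (HasDerivAt.const_mul b3 (hasDerivAt_pow 3 y)))
  have H : HasDerivAt (fun y' => f x y') (-(2*a^2*y) + b1*x^2 + 2*b2*x*y + 3*b3*y^2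
      + fderiv ℝ (fun p : ℝ × ℝ => R p.1 p.2) (x, y) (0, 1)) y := by
    simp only [hfR]
    refine aux_hasDerivAt_congr (Hp.add hU1) ?_
    push_cast
    ring
  exact H.deriv

lemma aux_pxx (f R : ℝ → ℝ → ℝ) (a b0 b1 b2 b3 : ℝ)
    (hfR : ∀ x y, f x y = x ^ 2 - a ^ 2 * y ^ 2 + b0 * x ^ 3 + b1 * x ^ 2 * y
      + b2 * x * y ^ 2 + b3 * y ^ 3 + R x y)
    (hR : ContDiff ℝ (⊤ : ℕ∞) (fun p : ℝ × ℝ => R p.1 p.2))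
    (x y : ℝ) : px (px f) x y = 2 + 6*b0*x + 2*b1*y
      + fderiv ℝ (fun p : ℝ × ℝ => fderiv ℝ (fun q : ℝ × ℝ => R q.1 q.2) p (1, 0)) (x, y) (1, 0) := by
  have hAc : ContDiff ℝ (⊤ : ℕ∞) (fun p : ℝ × ℝ => fderiv ℝ (fun q : ℝ × ℝ => R q.1 q.2) p ((1:ℝ), (0:ℝ))) :=
    (ContinuousLinearMap.apply ℝ ℝ ((1:ℝ), (0:ℝ))).contDiff.comp (hR.fderiv_right (by simp))
  have hline : HasDerivAt (fun x' : ℝ => ((x' : ℝ), y)) ((1:ℝ), (0:ℝ)) x :=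
    (hasDerivAt_id x).prodMk (hasDerivAt_const x y)
  have hU1 : HasDerivAt (fun x' : ℝ => (fun p : ℝ × ℝ => fderiv ℝ (fun q : ℝ × ℝ => R q.1 q.2) p ((1:ℝ), (0:ℝ))) (x', y))
      (fderiv ℝ (fun p : ℝ × ℝ => fderiv ℝ (fun q : ℝ × ℝ => R q.1 q.2) p ((1:ℝ), (0:ℝ))) (x, y) ((1:ℝ), (0:ℝ))) x :=
    (((hAc.differentiable (by simp)) (x, y)).hasFDerivAt).comp_hasDerivAt (f := fun x' : ℝ => ((x' : ℝ), y)) x hline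
  have Hp := ((((HasDerivAt.const_mul 2 (hasDerivAt_id x)).add
      (HasDerivAt.const_mul (3*b0) (hasDerivAt_pow 2 x))).add
      ((HasDerivAt.const_mul (2*b1) (hasDerivAt_id x)).mul_const y)).add_const (b2*y^2))
  have H : HasDerivAt (fun x' => px f x' y) (2 + 6*b0*x + 2*b1*y
      + fderiv ℝ (fun p : ℝ × ℝ => fderiv ℝ (fun q : ℝ × ℝ => R q.1 q.2) p (1, 0)) (x, y) (1, 0)) x := by
    simp only [aux_px f R a b0 b1 b2 b3 hfR hR]
    refine aux_hasDerivAt_congr (Hp.add hU1) ?_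
    push_cast
    ring
  exact H.deriv

lemma aux_pxy (f R : ℝ → ℝ → ℝ) (a b0 b1 b2 b3 : ℝ)
    (hfR : ∀ x y, f x y = x ^ 2 - a ^ 2 * y ^ 2 + b0 * x ^ 3 + b1 * x ^ 2 * y
      + b2 * x * y ^ 2 + b3 * y ^ 3 + R x y)
    (hR : ContDiff ℝ (⊤ : ℕ∞) (fun p : ℝ × ℝ => R p.1 p.2))
    (x y : ℝ) : py (px f) x y = 2*b1*x + 2*b2*y
      + fderiv ℝ (fun p : ℝ × ℝ => fderiv ℝ (fun q : ℝ × ℝ => R q.1 q.2) p (1, 0)) (x, y) (0, 1) := by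
  have hAc : ContDiff ℝ (⊤ : ℕ∞) (fun p : ℝ × ℝ => fderiv ℝ (fun q : ℝ × ℝ => R q.1 q.2) p ((1:ℝ), (0:ℝ))) :=
    (ContinuousLinearMap.apply ℝ ℝ ((1:ℝ), (0:ℝ))).contDiff.comp (hR.fderiv_right (by simp))
  have hline : HasDerivAt (fun y' : ℝ => ((x : ℝ), (y' : ℝ))) ((0:ℝ), (1:ℝ)) y :=
    (hasDerivAt_const y x).prodMk (hasDerivAt_id y)
  have hU1 : HasDerivAt (fun y' : ℝ => (fun p : ℝ × ℝ => fderiv ℝ (fun q : ℝ × ℝ => R q.1 q.2) p ((1:ℝ), (0:ℝ))) (x, y'))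
      (fderiv ℝ (fun p : ℝ × ℝ => fderiv ℝ (fun q : ℝ × ℝ => R q.1 q.2) p ((1:ℝ), (0:ℝ))) (x, y) ((0:ℝ), (1:ℝ))) y :=
    (((hAc.differentiable (by simp)) (x, y)).hasFDerivAt).comp_hasDerivAt y hline
  have Hp := ((((hasDerivAt_const y (2*x)).add_const (3*b0*x^2)).add
      (HasDerivAt.const_mul (2*b1*x) (hasDerivAt_id y))).add
      (HasDerivAt.const_mul b2 (hasDerivAt_pow 2 y)))
  have H : HasDerivAt (fun y' => px f x y') (2*b1*x + 2*b2*y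
      + fderiv ℝ (fun p : ℝ × ℝ => fderiv ℝ (fun q : ℝ × ℝ => R q.1 q.2) p (1, 0)) (x, y) (0, 1)) y := by
    simp only [aux_px f R a b0 b1 b2 b3 hfR hR]
    refine aux_hasDerivAt_congr (Hp.add hU1) ?_
    push_cast
    ring
  exact H.deriv

lemma aux_pyy (f R : ℝ → ℝ → ℝ) (a b0 b1 b2 b3 : ℝ)
    (hfR : ∀ x y, f x y = x ^ 2 - a ^ 2 * y ^ 2 + b0 * x ^ 3 + b1 * x ^ 2 * y
      + b2 * x * y ^ 2 + b3 * y ^ 3 + R x y)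
    (hR : ContDiff ℝ (⊤ : ℕ∞) (fun p : ℝ × ℝ => R p.1 p.2))
    (x y : ℝ) : py (py f) x y = -(2*a^2) + 2*b2*x + 6*b3*y
      + fderiv ℝ (fun p : ℝ × ℝ => fderiv ℝ (fun q : ℝ × ℝ => R q.1 q.2) p (0, 1)) (x, y) (0, 1) := by
  have hAc : ContDiff ℝ (⊤ : ℕ∞) (fun p : ℝ × ℝ => fderiv ℝ (fun q : ℝ × ℝ => R q.1 q.2) p ((0:ℝ), (1:ℝ))) :=
    (ContinuousLinearMap.apply ℝ ℝ ((0:ℝ), (1:ℝ))).contDiff.comp (hR.fderiv_right (by simp))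
  have hline : HasDerivAt (fun y' : ℝ => ((x : ℝ), (y' : ℝ))) ((0:ℝ), (1:ℝ)) y :=
    (hasDerivAt_const y x).prodMk (hasDerivAt_id y)
  have hU1 : HasDerivAt (fun y' : ℝ => (fun p : ℝ × ℝ => fderiv ℝ (fun q : ℝ × ℝ => R q.1 q.2) p ((0:ℝ), (1:ℝ))) (x, y'))
      (fderiv ℝ (fun p : ℝ × ℝ => fderiv ℝ (fun q : ℝ × ℝ => R q.1 q.2) p ((0:ℝ), (1:ℝ))) (x, y) ((0:ℝ), (1:ℝ))) y :=
    (((hAc.differentiable (by simp)) (x, y)).hasFDerivAt).comp_hasDerivAt y hline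
  have Hp := (((((HasDerivAt.const_mul (2*a^2) (hasDerivAt_id y)).neg).add_const (b1*x^2)).add
      (HasDerivAt.const_mul (2*b2*x) (hasDerivAt_id y))).add
      (HasDerivAt.const_mul (3*b3) (hasDerivAt_pow 2 y)))
  have H : HasDerivAt (fun y' => py f x y') (-(2*a^2) + 2*b2*x + 6*b3*y
      + fderiv ℝ (fun p : ℝ × ℝ => fderiv ℝ (fun q : ℝ × ℝ => R q.1 q.2) p (0, 1)) (x, y) (0, 1)) y := by
    simp only [aux_py f R a b0 b1 b2 b3 hfR hR]
    refine aux_hasDerivAt_congr (Hp.add hU1) ?_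
    push_cast
    ring
  exact H.deriv

set_option maxHeartbeats 1000000 in
theorem limiting_curvature_along_VH1_infinite (f R : ℝ → ℝ → ℝ) (a b0 b1 b2 b3 : ℝ) (ha : 0 < a)
    (hfR : ∀ x y, f x y = x ^ 2 - a ^ 2 * y ^ 2 + b0 * x ^ 3 + b1 * x ^ 2 * y + b2 * x * y ^ 2 + b3 * y ^ 3 + R x y)
    (hR : ContDiff ℝ (⊤ : ℕ∞) (fun p : ℝ × ℝ => R p.1 p.2))
    (hRo : (fun p : ℝ × ℝ => R p.1 p.2) =o[𝓝 (0 : ℝ × ℝ)] fun p => ‖p‖ ^ 3)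
    (φ : ℝ → ℝ) (hφ : ContDiff ℝ (⊤ : ℕ∞) φ) (hφ0 : φ 0 = 0) (hφ1 : deriv φ 0 = 0)
    (hbranch : ∀ᶠ y in 𝓝 (0 : ℝ), Vf f (φ y) y = 0) :
    ((fun y => (Infl f (φ y) y) ^ 2 - 64 * a ^ 8 * y ^ 4) =o[𝓝 (0 : ℝ)] fun y => y ^ 4)
    ∧ ((fun y => (px f (φ y) y ^ 2 + py f (φ y) y ^ 2) ^ 3 - 64 * a ^ 12 * y ^ 6)
        =o[𝓝 (0 : ℝ)] fun y => y ^ 6)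
    ∧ Filter.Tendsto
        (fun y => (Infl f (φ y) y) ^ 2 / (px f (φ y) y ^ 2 + py f (φ y) y ^ 2) ^ 3)
        (𝓝[≠] (0 : ℝ)) atTop := by
  clear hbranch
  -- facts about R
  have hA0 : fderiv ℝ (fun p : ℝ × ℝ => R p.1 p.2) 0 = 0 := aux_fderiv1_zero _ hR hRo
  have hB0 : fderiv ℝ (fderiv ℝ (fun p : ℝ × ℝ => R p.1 p.2)) 0 = 0 := aux_fderiv2_zero _ hR hRo
  have hAc : ContDiff ℝ (⊤ : ℕ∞) (fderiv ℝ (fun p : ℝ × ℝ => R p.1 p.2)) := hR.fderiv_right (by simp)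
  have hAo : (fun p : ℝ × ℝ => fderiv ℝ (fun q : ℝ × ℝ => R q.1 q.2) p) =o[𝓝 (0:ℝ×ℝ)] fun p => p := by
    have h := (hAc.differentiable (by simp) 0).hasFDerivAt
    rw [hB0] at h
    rw [hasFDerivAt_iff_isLittleO_nhds_zero] at h
    simpa [hA0] using h
  have hA1o : (fun p : ℝ × ℝ => fderiv ℝ (fun q : ℝ × ℝ => R q.1 q.2) p (1, 0)) =o[𝓝 (0:ℝ×ℝ)] fun p => p :=
    ((ContinuousLinearMap.apply ℝ ℝ ((1:ℝ), (0:ℝ))).isBigO_comp _ (𝓝 (0:ℝ×ℝ))).trans_isLittleO hAo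
  have hA2o : (fun p : ℝ × ℝ => fderiv ℝ (fun q : ℝ × ℝ => R q.1 q.2) p (0, 1)) =o[𝓝 (0:ℝ×ℝ)] fun p => p :=
    ((ContinuousLinearMap.apply ℝ ℝ ((0:ℝ), (1:ℝ))).isBigO_comp _ (𝓝 (0:ℝ×ℝ))).trans_isLittleO hAo
  -- curve facts
  have hφd : HasDerivAt φ 0 0 := by
    have := (hφ.differentiable (by simp) 0).hasDerivAt
    rwa [hφ1] at this
  have hφo : (fun y : ℝ => φ y) =o[𝓝 (0:ℝ)] fun y => y := by
    have h := hasDerivAt_iff_isLittleO.mp hφd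
    simpa [hφ0] using h
  have hφO := hφo.isBigO
  have hφt : Tendsto φ (𝓝 0) (𝓝 0) := by
    have := hφ.continuous.tendsto 0
    rwa [hφ0] at this
  have hct : Tendsto (fun y => ((φ y, y) : ℝ × ℝ)) (𝓝 0) (𝓝 (0:ℝ×ℝ)) := by
    have := hφt.prodMk_nhds (tendsto_id (x := 𝓝 (0:ℝ)))
    exact this
  have hcO : (fun y => ((φ y, y) : ℝ × ℝ)) =O[𝓝 (0:ℝ)] fun y => y := by
    rw [isBigO_iff]
    refine ⟨2, ?_⟩
    filter_upwards [hφo.def one_pos] with y hy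
    rw [Prod.norm_def]
    simp only [Real.norm_eq_abs] at hy ⊢
    exact max_le (by nlinarith [abs_nonneg y]) (by nlinarith [abs_nonneg y])
  have hcompo : ∀ G : ℝ × ℝ → ℝ, (G =o[𝓝 (0:ℝ×ℝ)] fun p => p) →
      ((fun y => G (φ y, y)) =o[𝓝 (0:ℝ)] fun y => y) := by
    intro G hG
    exact (hG.comp_tendsto hct).trans_isBigO hcO
  -- basic scalar asymptotics
  have hIdO : (fun y : ℝ => y) =O[𝓝 (0:ℝ)] fun y => y := isBigO_refl _ _
  have hyo1 : (fun y : ℝ => y) =o[𝓝 (0:ℝ)] (fun _ => (1:ℝ)) := (isLittleO_one_iff ℝ).mpr tendsto_id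
  have hyyo : (fun y : ℝ => y * y) =o[𝓝 (0:ℝ)] fun y => y := by
    simpa using hyo1.mul_isBigO hIdO
  have hyyO := hyyo.isBigO
  -- X := px f (φ y) y  is o(y)
  have hXo : (fun y => px f (φ y) y) =o[𝓝 (0:ℝ)] fun y => y := by
    have t1 : (fun y => (2:ℝ) * φ y) =o[𝓝 (0:ℝ)] fun y => y := hφo.const_mul_left 2
    have t2 : (fun y => 3*b0*(φ y * φ y)) =o[𝓝 (0:ℝ)] fun y => y :=
      ((hφo.mul_isBigO hφO).trans_isBigO hyyO).const_mul_left (3*b0)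
    have t3 : (fun y => 2*b1*(φ y * y)) =o[𝓝 (0:ℝ)] fun y => y :=
      ((hφo.mul_isBigO hIdO).trans_isBigO hyyO).const_mul_left (2*b1)
    have t4 : (fun y => b2*(y * y)) =o[𝓝 (0:ℝ)] fun y => y := hyyo.const_mul_left b2
    have t5 := hcompo _ hA1o
    exact ((((t1.add t2).add t3).add t4).add t5).congr
      (fun y => by rw [aux_px f R a b0 b1 b2 b3 hfR hR (φ y) y]; ring) (fun y => rfl)
  have hXO := hXo.isBigO
  -- Y := py f (φ y) y : Y + 2a²y = o(y)
  have hE : (fun y => py f (φ y) y + 2*a^2*y) =o[𝓝 (0:ℝ)] fun y => y := by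
    have u1 : (fun y => b1*(φ y * φ y)) =o[𝓝 (0:ℝ)] fun y => y :=
      ((hφo.mul_isBigO hφO).trans_isBigO hyyO).const_mul_left b1
    have u2 : (fun y => 2*b2*(φ y * y)) =o[𝓝 (0:ℝ)] fun y => y :=
      ((hφo.mul_isBigO hIdO).trans_isBigO hyyO).const_mul_left (2*b2)
    have u3 : (fun y => 3*b3*(y * y)) =o[𝓝 (0:ℝ)] fun y => y := hyyo.const_mul_left (3*b3)
    have u4 := hcompo _ hA2o
    exact (((u1.add u2).add u3).add u4).congr
      (fun y => by rw [aux_py f R a b0 b1 b2 b3 hfR hR (φ y) y]; ring) (fun y => rfl)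
  have h2ay : (fun y : ℝ => 2*a^2*y) =O[𝓝 (0:ℝ)] fun y => y := hIdO.const_mul_left (2*a^2)
  have hYO : (fun y => py f (φ y) y) =O[𝓝 (0:ℝ)] fun y => y :=
    (hE.isBigO.sub h2ay).congr (fun y => by ring) (fun y => rfl)
  have hYmO : (fun y => py f (φ y) y - 2*a^2*y) =O[𝓝 (0:ℝ)] fun y => y := hYO.sub h2ay
  -- second-order coefficients along the curve
  have hg11z : fderiv ℝ (fun p : ℝ × ℝ => fderiv ℝ (fun q : ℝ × ℝ => R q.1 q.2) p ((1:ℝ), (0:ℝ))) 0 = 0 := by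
    have h := fderiv_clm_apply (𝕜 := ℝ) (c := fderiv ℝ (fun q : ℝ × ℝ => R q.1 q.2))
      (u := fun _ : ℝ × ℝ => ((1:ℝ), (0:ℝ))) (x := 0) (hAc.differentiable (by simp) 0)
      (differentiableAt_const _)
    rw [hA0, hB0] at h
    simpa using h
  have hg22z : fderiv ℝ (fun p : ℝ × ℝ => fderiv ℝ (fun q : ℝ × ℝ => R q.1 q.2) p ((0:ℝ), (1:ℝ))) 0 = 0 := by
    have h := fderiv_clm_apply (𝕜 := ℝ) (c := fderiv ℝ (fun q : ℝ × ℝ => R q.1 q.2))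
      (u := fun _ : ℝ × ℝ => ((0:ℝ), (1:ℝ))) (x := 0) (hAc.differentiable (by simp) 0)
      (differentiableAt_const _)
    rw [hA0, hB0] at h
    simpa using h
  have hce1 : ContDiff ℝ (⊤ : ℕ∞) (fun p : ℝ × ℝ => fderiv ℝ (fun q : ℝ × ℝ => R q.1 q.2) p ((1:ℝ), (0:ℝ))) :=
    (ContinuousLinearMap.apply ℝ ℝ ((1:ℝ), (0:ℝ))).contDiff.comp (hR.fderiv_right (by simp))
  have hce2 : ContDiff ℝ (⊤ : ℕ∞) (fun p : ℝ × ℝ => fderiv ℝ (fun q : ℝ × ℝ => R q.1 q.2) p ((0:ℝ), (1:ℝ))) :=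
    (ContinuousLinearMap.apply ℝ ℝ ((0:ℝ), (1:ℝ))).contDiff.comp (hR.fderiv_right (by simp))
  have hgcont : ∀ (G : ℝ × ℝ → ℝ) (v : ℝ × ℝ), ContDiff ℝ (⊤ : ℕ∞) G →
      Continuous (fun p : ℝ × ℝ => fderiv ℝ G p v) := by
    intro G v hG
    exact ((hG.fderiv_right (m := (⊤ : ℕ∞)) (by simp)).continuous).clm_apply continuous_const
  -- P := pxx f ∘ curve → 2
  have hg11t : Tendsto (fun y => fderiv ℝ (fun p : ℝ × ℝ => fderiv ℝ (fun q : ℝ × ℝ => R q.1 q.2) p ((1:ℝ), (0:ℝ))) (φ y, y) ((1:ℝ), (0:ℝ))) (𝓝 0) (𝓝 0) := by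
    have h := ((hgcont _ ((1:ℝ), (0:ℝ)) hce1).tendsto 0).comp hct
    rw [hg11z] at h
    simpa [Function.comp_def] using h
  have hPt : Tendsto (fun y => px (px f) (φ y) y) (𝓝 0) (𝓝 2) := by
    have T : Tendsto (fun y => 2 + 6*b0*φ y + 2*b1*y
        + fderiv ℝ (fun p : ℝ × ℝ => fderiv ℝ (fun q : ℝ × ℝ => R q.1 q.2) p ((1:ℝ), (0:ℝ))) (φ y, y) ((1:ℝ), (0:ℝ)))
        (𝓝 0) (𝓝 (2 + 6*b0*0 + 2*b1*0 + 0)) :=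
      (((tendsto_const_nhds.add (hφt.const_mul (6*b0))).add (tendsto_id.const_mul (2*b1))).add hg11t)
    have T2 := Filter.Tendsto.congr (fun y => (aux_pxx f R a b0 b1 b2 b3 hfR hR (φ y) y).symm) T
    simpa using T2
  have hP1 : (fun y => px (px f) (φ y) y - 2) =o[𝓝 (0:ℝ)] (fun _ => (1:ℝ)) := by
    rw [isLittleO_one_iff ℝ]
    simpa using hPt.sub_const 2
  -- Q := pxy f ∘ curve is O(1)
  have hg12t : Tendsto (fun y => fderiv ℝ (fun p : ℝ × ℝ => fderiv ℝ (fun q : ℝ × ℝ => R q.1 q.2) p ((1:ℝ), (0:ℝ))) (φ y, y) ((0:ℝ), (1:ℝ))) (𝓝 0)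
      (𝓝 (fderiv ℝ (fun p : ℝ × ℝ => fderiv ℝ (fun q : ℝ × ℝ => R q.1 q.2) p ((1:ℝ), (0:ℝ))) 0 ((0:ℝ), (1:ℝ)))) :=
    ((hgcont _ ((0:ℝ), (1:ℝ)) hce1).tendsto 0).comp hct
  have hQO : (fun y => py (px f) (φ y) y) =O[𝓝 (0:ℝ)] (fun _ => (1:ℝ)) := by
    have T : Tendsto (fun y => 2*b1*φ y + 2*b2*y
        + fderiv ℝ (fun p : ℝ × ℝ => fderiv ℝ (fun q : ℝ × ℝ => R q.1 q.2) p ((1:ℝ), (0:ℝ))) (φ y, y) ((0:ℝ), (1:ℝ)))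
        (𝓝 0) (𝓝 (2*b1*0 + 2*b2*0 + fderiv ℝ (fun p : ℝ × ℝ => fderiv ℝ (fun q : ℝ × ℝ => R q.1 q.2) p ((1:ℝ), (0:ℝ))) 0 ((0:ℝ), (1:ℝ)))) :=
      (((hφt.const_mul (2*b1)).add (tendsto_id.const_mul (2*b2))).add hg12t)
    have T2 := Filter.Tendsto.congr (fun y => (aux_pxy f R a b0 b1 b2 b3 hfR hR (φ y) y).symm) T
    exact T2.isBigO_one ℝ
  -- S := pyy f ∘ curve is O(1)
  have hg22t : Tendsto (fun y => fderiv ℝ (fun p : ℝ × ℝ => fderiv ℝ (fun q : ℝ × ℝ => R q.1 q.2) p ((0:ℝ), (1:ℝ))) (φ y, y) ((0:ℝ), (1:ℝ))) (𝓝 0)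
      (𝓝 (fderiv ℝ (fun p : ℝ × ℝ => fderiv ℝ (fun q : ℝ × ℝ => R q.1 q.2) p ((0:ℝ), (1:ℝ))) 0 ((0:ℝ), (1:ℝ)))) :=
    ((hgcont _ ((0:ℝ), (1:ℝ)) hce2).tendsto 0).comp hct
  have hSO : (fun y => py (py f) (φ y) y) =O[𝓝 (0:ℝ)] (fun _ => (1:ℝ)) := by
    have T : Tendsto (fun y => -(2*a^2) + 2*b2*φ y + 6*b3*y
        + fderiv ℝ (fun p : ℝ × ℝ => fderiv ℝ (fun q : ℝ × ℝ => R q.1 q.2) p ((0:ℝ), (1:ℝ))) (φ y, y) ((0:ℝ), (1:ℝ)))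
        (𝓝 0) (𝓝 (-(2*a^2) + 2*b2*0 + 6*b3*0 + fderiv ℝ (fun p : ℝ × ℝ => fderiv ℝ (fun q : ℝ × ℝ => R q.1 q.2) p ((0:ℝ), (1:ℝ))) 0 ((0:ℝ), (1:ℝ)))) :=
      ((((tendsto_const_nhds).add (hφt.const_mul (2*b2))).add (tendsto_id.const_mul (6*b3))).add hg22t)
    have T2 := Filter.Tendsto.congr (fun y => (aux_pyy f R a b0 b1 b2 b3 hfR hR (φ y) y).symm) T
    exact T2.isBigO_one ℝ
  -- quadratic building blocks (all little-o of y^2)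
  have k1 : (fun y => (px (px f) (φ y) y - 2) * (py f (φ y) y * py f (φ y) y)) =o[𝓝 (0:ℝ)] fun y => y^2 :=
    (hP1.mul_isBigO (hYO.mul hYO)).congr (fun y => rfl) (fun y => by ring)
  have k2 : (fun y => (py f (φ y) y + 2*a^2*y) * (py f (φ y) y - 2*a^2*y)) =o[𝓝 (0:ℝ)] fun y => y^2 :=
    (hE.mul_isBigO hYmO).congr (fun y => rfl) (fun y => by ring)
  have k3 : (fun y => py (px f) (φ y) y * (px f (φ y) y * py f (φ y) y)) =o[𝓝 (0:ℝ)] fun y => y^2 :=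
    (hQO.mul_isLittleO (hXo.mul_isBigO hYO)).congr (fun y => rfl) (fun y => by ring)
  have k4 : (fun y => py (py f) (φ y) y * (px f (φ y) y * px f (φ y) y)) =o[𝓝 (0:ℝ)] fun y => y^2 :=
    (hSO.mul_isLittleO (hXo.mul_isBigO hXO)).congr (fun y => rfl) (fun y => by ring)
  have hInfl : (fun y => Infl f (φ y) y - 8*a^4*y^2) =o[𝓝 (0:ℝ)] fun y => y^2 := by
    have sum := ((k1.add (k2.const_mul_left 2)).sub (k3.const_mul_left 2)).add k4
    exact sum.congr (fun y => by simp only [Infl]; ring) (fun y => rfl)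
  -- Goal 1
  have hG1 : (fun y => (Infl f (φ y) y) ^ 2 - 64 * a ^ 8 * y ^ 4) =o[𝓝 (0:ℝ)] fun y => y ^ 4 := by
    have hplus : (fun y => Infl f (φ y) y + 8*a^4*y^2) =O[𝓝 (0:ℝ)] fun y => y^2 :=
      (hInfl.isBigO.add ((isBigO_refl (fun y : ℝ => y^2) (𝓝 (0:ℝ))).const_mul_left (16*a^4))).congr
        (fun y => by ring) (fun y => rfl)
    exact (hInfl.mul_isBigO hplus).congr (fun y => by ring) (fun y => by ring)
  -- Goal 2
  have hDo : (fun y => px f (φ y) y ^ 2 + py f (φ y) y ^ 2 - 4*a^4*y^2) =o[𝓝 (0:ℝ)] fun y => y^2 := by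
    have m1 : (fun y => px f (φ y) y * px f (φ y) y) =o[𝓝 (0:ℝ)] fun y => y^2 :=
      (hXo.mul_isBigO hXO).congr (fun y => rfl) (fun y => by ring)
    exact (m1.add k2).congr (fun y => by ring) (fun y => rfl)
  have hDO : (fun y => px f (φ y) y ^ 2 + py f (φ y) y ^ 2) =O[𝓝 (0:ℝ)] fun y => y^2 :=
    (hDo.isBigO.add ((isBigO_refl (fun y : ℝ => y^2) (𝓝 (0:ℝ))).const_mul_left (4*a^4))).congr
      (fun y => by ring) (fun y => rfl)
  have hy2O : (fun y : ℝ => 4*a^4*y^2) =O[𝓝 (0:ℝ)] fun y => y^2 :=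
    (isBigO_refl (fun y : ℝ => y^2) (𝓝 (0:ℝ))).const_mul_left (4*a^4)
  have hG2 : (fun y => (px f (φ y) y ^ 2 + py f (φ y) y ^ 2) ^ 3 - 64 * a ^ 12 * y ^ 6) =o[𝓝 (0:ℝ)] fun y => y ^ 6 := by
    have q1 : (fun y => (px f (φ y) y ^ 2 + py f (φ y) y ^ 2) * (px f (φ y) y ^ 2 + py f (φ y) y ^ 2)) =O[𝓝 (0:ℝ)] fun y => y^4 :=
      (hDO.mul hDO).congr (fun y => rfl) (fun y => by ring)
    have q2 : (fun y => (px f (φ y) y ^ 2 + py f (φ y) y ^ 2) * (4*a^4*y^2)) =O[𝓝 (0:ℝ)] fun y => y^4 :=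
      (hDO.mul hy2O).congr (fun y => rfl) (fun y => by ring)
    have q3 : (fun y : ℝ => (4*a^4*y^2) * (4*a^4*y^2)) =O[𝓝 (0:ℝ)] fun y => y^4 :=
      (hy2O.mul hy2O).congr (fun y => rfl) (fun y => by ring)
    exact (hDo.mul_isBigO ((q1.add q2).add q3)).congr (fun y => by ring) (fun y => by ring)
  refine ⟨hG1, hG2, ?_⟩
  -- Goal 3
  have hb1 := hG1.def (show (0:ℝ) < 32*a^8 by positivity)
  have hb2 := hG2.def (show (0:ℝ) < 32*a^12 by positivity)
  have hbase : Tendsto (fun y : ℝ => (y^2)⁻¹) (𝓝[≠] (0:ℝ)) atTop := by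
    have h2 : Tendsto (fun y : ℝ => y^2) (𝓝[≠] (0:ℝ)) (𝓝[>] (0:ℝ)) := by
      apply tendsto_nhdsWithin_of_tendsto_nhds_of_eventually_within
      · have h3 : Tendsto (fun y : ℝ => y^2) (𝓝 0) (𝓝 0) := by
          simpa using ((continuous_pow 2).tendsto (0:ℝ))
        exact h3.mono_left nhdsWithin_le_nhds
      · filter_upwards [self_mem_nhdsWithin] with y hy
        have hy0 : y ≠ 0 := hy
        have : (0:ℝ) < y^2 := by positivity
        exact Set.mem_Ioi.mpr this
    exact tendsto_inv_nhdsGT_zero.comp h2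
  have hcmp : Tendsto (fun y : ℝ => (1/(3*a^4)) * (y^2)⁻¹) (𝓝[≠] (0:ℝ)) atTop :=
    Tendsto.const_mul_atTop (by positivity) hbase
  apply tendsto_atTop_mono' _ ?_ hcmp
  filter_upwards [hb1.filter_mono nhdsWithin_le_nhds, hb2.filter_mono nhdsWithin_le_nhds,
    self_mem_nhdsWithin] with y h1 h2 hy
  have hy0 : y ≠ 0 := hy
  have hy4 : (0:ℝ) < y^4 := by positivity
  have hy6 : (0:ℝ) < y^6 := by positivity
  have h1' : 32*a^8*y^4 ≤ (Infl f (φ y) y)^2 := by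
    rw [Real.norm_eq_abs, Real.norm_eq_abs, abs_of_pos hy4] at h1
    have := (abs_le.mp h1).1
    nlinarith [pow_pos ha 8]
  have h2l : 32*a^12*y^6 ≤ (px f (φ y) y ^ 2 + py f (φ y) y ^ 2) ^ 3 := by
    rw [Real.norm_eq_abs, Real.norm_eq_abs, abs_of_pos hy6] at h2
    have := (abs_le.mp h2).1
    nlinarith [pow_pos ha 12]
  have h2u : (px f (φ y) y ^ 2 + py f (φ y) y ^ 2) ^ 3 ≤ 96*a^12*y^6 := by
    rw [Real.norm_eq_abs, Real.norm_eq_abs, abs_of_pos hy6] at h2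
    have := (abs_le.mp h2).2
    nlinarith [pow_pos ha 12]
  have hDpos : (0:ℝ) < (px f (φ y) y ^ 2 + py f (φ y) y ^ 2) ^ 3 :=
    lt_of_lt_of_le (by positivity) h2l
  have heq : (1/(3*a^4)) * (y^2)⁻¹ = (32*a^8*y^4)/(96*a^12*y^6) := by
    field_simp
    ring
  rw [heq]
  exact div_le_div₀ (sq_nonneg _) h1' hDpos h2u
end
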